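/- arXiv:2204.06051 — 12 statements merged into one kernel-verified Lean document; each statement's English description precedes it below -/
import Mathlib

section
/- Let ⊗ and ⊕ be uninorms on [0,1]. Then (⊗, ⊕) satisfies the rearrangement inequality (for all n, all sorted sequences x₁≤…≤xₙ and y₁≤…≤yₙ in [0,1], and all permutations σ, the sum ⊕ᵢ (x_{σ(i)} ⊗ yᵢ) is at most ⊕ᵢ (xᵢ ⊗ yᵢ) and at least ⊕ᵢ (x_{n+1-i} ⊗ yᵢ)) if and only if for all 0 ≤ x₁ ≤ x₂ ≤ 1 and 0 ≤ y₁ ≤ y₂ ≤ 1, (x₁⊗y₁) ⊕ (x₂⊗y₂) ≥ (x₁⊗y₂) ⊕ (x₂⊗y₁). -/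
open Set

def IsUninorm (f : ℝ → ℝ → ℝ) : Prop :=
  (∀ x ∈ Icc (0:ℝ) 1, ∀ y ∈ Icc (0:ℝ) 1, f x y ∈ Icc (0:ℝ) 1) ∧
  (∀ x ∈ Icc (0:ℝ) 1, ∀ y ∈ Icc (0:ℝ) 1, f x y = f y x) ∧
  (∀ x ∈ Icc (0:ℝ) 1, ∀ y ∈ Icc (0:ℝ) 1, ∀ z ∈ Icc (0:ℝ) 1, f (f x y) z = f x (f y z)) ∧
  (∀ x ∈ Icc (0:ℝ) 1, ∀ y ∈ Icc (0:ℝ) 1, ∀ z ∈ Icc (0:ℝ) 1, x ≤ y → f x z ≤ f y z) ∧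
  (∃ e ∈ Icc (0:ℝ) 1, ∀ x ∈ Icc (0:ℝ) 1, f x e = x)

def iterOp (op : ℝ → ℝ → ℝ) : (n : ℕ) → (Fin (n+1) → ℝ) → ℝ
  | 0, v => v 0
  | n+1, v => op (iterOp op n (fun i => v i.castSucc)) (v (Fin.last (n+1)))

def RearrangementIneq (ot op : ℝ → ℝ → ℝ) : Prop :=
  ∀ n : ℕ, ∀ x y : Fin (n+1) → ℝ,
    Monotone x → Monotone y →
    (∀ i, x i ∈ Icc (0:ℝ) 1) → (∀ i, y i ∈ Icc (0:ℝ) 1) →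
    ∀ σ : Equiv.Perm (Fin (n+1)),
      iterOp op n (fun i => ot (x i.rev) (y i)) ≤
          iterOp op n (fun i => ot (x (σ i)) (y i)) ∧
        iterOp op n (fun i => ot (x (σ i)) (y i)) ≤
          iterOp op n (fun i => ot (x i) (y i))

def DualRearrangementIneq (ot op : ℝ → ℝ → ℝ) : Prop :=
  ∀ n : ℕ, ∀ x y : Fin (n+1) → ℝ,
    Monotone x → Monotone y →
    (∀ i, x i ∈ Icc (0:ℝ) 1) → (∀ i, y i ∈ Icc (0:ℝ) 1) →
    ∀ σ : Equiv.Perm (Fin (n+1)),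
      iterOp ot n (fun i => op (x i) (y i)) ≤
          iterOp ot n (fun i => op (x (σ i)) (y i)) ∧
        iterOp ot n (fun i => op (x (σ i)) (y i)) ≤
          iterOp ot n (fun i => op (x i.rev) (y i))

/-!
Put `a ⊕ b := op a b` on `[0,1]`; with the identity of the uninorm `op` this is an ordered
commutative monoid, in which `iterOp op` is the finite product. The `2 × 2` condition says that
`F a b := a ⊗ b` has increasing differences with respect to `⊕`, and for such `F` the classical
proof of the rearrangement inequality goes through: moving the smallest `x` to the position of the
smallest `y` by one transposition does not decrease `⊕ᵢ F (x (σ i)) (y i)`, and induction takes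
care of the rest. The lower bound is the upper bound in the order duals.
-/

open Equiv

def HasIncreasingDifferences {α β M : Type*} [Preorder α] [Preorder β] [Mul M] [LE M]
    (F : α → β → M) : Prop :=
  ∀ ⦃a b : α⦄, a ≤ b → ∀ ⦃c d : β⦄, c ≤ d → F a d * F b c ≤ F a c * F b d

theorem Fintype.prod_le_prod_of_eq_off_pair {ι M : Type*} [Fintype ι] [DecidableEq ι]
    [CommMonoid M] [Preorder M] [IsOrderedMonoid M] {f g : ι → M} {i j : ι} (hij : i ≠ j)
    (hfg : ∀ k, k ≠ i → k ≠ j → f k = g k) (hpair : f i * f j ≤ g i * g j) :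
    ∏ k, f k ≤ ∏ k, g k := by
  have hcompl : ∏ k ∈ {i, j}ᶜ, f k = ∏ k ∈ {i, j}ᶜ, g k :=
    Finset.prod_congr rfl fun k hk => by
      simp only [Finset.mem_compl, Finset.mem_insert, Finset.mem_singleton, not_or] at hk
      exact hfg k hk.1 hk.2
  rw [← Finset.prod_mul_prod_compl {i, j} f, ← Finset.prod_mul_prod_compl {i, j} g,
    Finset.prod_pair hij, Finset.prod_pair hij, hcompl]
  exact mul_le_mul_left hpair _

theorem Equiv.Perm.exists_apply_succ_eq_succ_of_apply_zero {n : ℕ} {σ : Perm (Fin (n + 1))}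
    (h : σ 0 = 0) :
    ∃ τ : Perm (Fin n), ∀ k, σ k.succ = (τ k).succ := by
  obtain ⟨⟨p, τ⟩, rfl⟩ := Perm.decomposeFin.symm.surjective σ
  rw [Perm.decomposeFin_symm_apply_zero] at h
  subst h
  exact ⟨τ, fun k => by rw [Perm.decomposeFin_symm_apply_succ, swap_self, refl_apply]⟩

theorem HasIncreasingDifferences.dual {α β M : Type*} [Preorder α] [Preorder β] [CommMagma M] [LE M]
    {F : α → β → M} (hF : HasIncreasingDifferences F) :
    HasIncreasingDifferences (fun (a : αᵒᵈ) b => OrderDual.toDual (F (OrderDual.ofDual a) b)) :=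
  fun a b hab c d hcd => by
    change F (OrderDual.ofDual a) c * F (OrderDual.ofDual b) d ≤
      F (OrderDual.ofDual a) d * F (OrderDual.ofDual b) c
    exact (mul_comm _ _).trans_le ((hF hab hcd).trans_eq (mul_comm _ _))

namespace HasIncreasingDifferences

variable {α β M : Type*} [Preorder α] [Preorder β] [CommMonoid M] [Preorder M]
  [IsOrderedMonoid M] {F : α → β → M}

theorem prod_comp_swap_le {ι : Type*} [Fintype ι] [DecidableEq ι] (hF : HasIncreasingDifferences F)
    {x : ι → α} {y : ι → β} {i j : ι} (hx : x i ≤ x j) (hy : y i ≤ y j) :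
    ∏ k, F (x (swap i j k)) (y k) ≤ ∏ k, F (x k) (y k) := by
  rcases eq_or_ne i j with rfl | hij
  · simp only [swap_self, refl_apply, le_refl]
  refine Fintype.prod_le_prod_of_eq_off_pair hij
    (fun k hki hkj => by rw [swap_apply_of_ne_of_ne hki hkj]) ?_
  rw [swap_apply_left, swap_apply_right, mul_comm]
  exact hF hx hy

theorem prod_comp_perm_le_prod (hF : HasIncreasingDifferences F) :
    ∀ {n : ℕ} {x : Fin n → α} {y : Fin n → β}, Monotone x → Monotone y → ∀ σ : Perm (Fin n),
      ∏ i, F (x (σ i)) (y i) ≤ ∏ i, F (x i) (y i)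
  | 0, _, _, _, _, _ => by simp
  | n + 1, x, y, hx, hy, σ => by
    set j := σ⁻¹ 0
    set ρ := σ * swap 0 j
    have hσ : ∀ k, σ k = ρ (swap 0 j k) := fun k => by
      simp only [ρ, Perm.mul_apply, swap_apply_self]
    have hρ0 : ρ 0 = 0 := by simp [ρ, j]
    obtain ⟨τ, hτ⟩ := Perm.exists_apply_succ_eq_succ_of_apply_zero hρ0
    have hρj : ρ j = σ 0 := by simp [ρ]
    calc ∏ i, F (x (σ i)) (y i)
        = ∏ i, F ((x ∘ ρ) (swap 0 j i)) (y i) := by simp only [hσ, Function.comp_apply]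
      _ ≤ ∏ i, F (x (ρ i)) (y i) :=
          hF.prod_comp_swap_le (show x (ρ 0) ≤ x (ρ j) by rw [hρ0, hρj]; exact hx (Fin.zero_le _))
            (hy (Fin.zero_le _))
      _ = F (x 0) (y 0) * ∏ k : Fin n, F (x (τ k).succ) (y k.succ) := by
          rw [Fin.prod_univ_succ, hρ0]; simp only [hτ]
      _ ≤ F (x 0) (y 0) * ∏ k : Fin n, F (x k.succ) (y k.succ) :=
          mul_le_mul_right (prod_comp_perm_le_prod hF (hx.comp (Fin.strictMono_succ.monotone))
            (hy.comp (Fin.strictMono_succ.monotone)) τ) _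
      _ = ∏ i, F (x i) (y i) := (Fin.prod_univ_succ fun i => F (x i) (y i)).symm

theorem prod_comp_rev_le_prod_comp_perm (hF : HasIncreasingDifferences F) {n : ℕ}
    {x : Fin n → α} {y : Fin n → β} (hx : Monotone x) (hy : Monotone y) (σ : Perm (Fin n)) :
    ∏ i, F (x i.rev) (y i) ≤ ∏ i, F (x (σ i)) (y i) := by
  have := hF.dual.prod_comp_perm_le_prod (x := OrderDual.toDual ∘ x ∘ Fin.rev)
    (monotone_toDual_comp_iff.2 (hx.comp_antitone Fin.rev_anti)) hy (σ.trans Fin.revPerm)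
  simp only [Function.comp_apply, Equiv.trans_apply, Fin.revPerm_apply, Fin.rev_rev,
    OrderDual.ofDual_toDual] at this
  exact this

end HasIncreasingDifferences

/-- A new type rather than `Icc (0 : ℝ) 1`, which already carries the multiplication of `ℝ`. -/
@[ext]
structure UninormMonoid (op : ℝ → ℝ → ℝ) where
  val : ℝ
  mem : val ∈ Icc (0:ℝ) 1

namespace UninormMonoid

variable {op : ℝ → ℝ → ℝ}

instance : PartialOrder (UninormMonoid op) :=
  PartialOrder.lift val fun _ _ => UninormMonoid.ext

variable [hop : Fact (IsUninorm op)]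

noncomputable instance : CommMonoid (UninormMonoid op) where
  mul a b := ⟨op a.val b.val, hop.out.1 _ a.mem _ b.mem⟩
  one := ⟨hop.out.2.2.2.2.choose, hop.out.2.2.2.2.choose_spec.1⟩
  mul_assoc a b c := UninormMonoid.ext (hop.out.2.2.1 _ a.mem _ b.mem _ c.mem)
  mul_comm a b := UninormMonoid.ext (hop.out.2.1 _ a.mem _ b.mem)
  mul_one a := UninormMonoid.ext (hop.out.2.2.2.2.choose_spec.2 _ a.mem)
  one_mul a := UninormMonoid.ext <|
    (hop.out.2.1 _ hop.out.2.2.2.2.choose_spec.1 _ a.mem).trans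
      (hop.out.2.2.2.2.choose_spec.2 _ a.mem)

theorem val_mul (a b : UninormMonoid op) : (a * b).val = op a.val b.val := rfl

instance : IsOrderedMonoid (UninormMonoid op) where
  mul_le_mul_left a b hab c := hop.out.2.2.2.1 _ a.mem _ b.mem _ c.mem hab

end UninormMonoid

theorem iterOp_map_eq_prod {N : Type*} [CommMonoid N] {op : ℝ → ℝ → ℝ} {ι : N → ℝ}
    (hι : ∀ a b, ι (a * b) = op (ι a) (ι b)) :
    ∀ (n : ℕ) (v : Fin (n + 1) → N), iterOp op n (fun i => ι (v i)) = ι (∏ i, v i)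
  | 0, v => by simp [iterOp]
  | n + 1, v => by
    rw [iterOp, iterOp_map_eq_prod hι n, ← hι, ← Fin.prod_univ_castSucc]

theorem rearrangementIneq_of_two_by_two {ot op : ℝ → ℝ → ℝ}
    (hot : ∀ x ∈ Icc (0:ℝ) 1, ∀ y ∈ Icc (0:ℝ) 1, ot x y ∈ Icc (0:ℝ) 1) (hop : IsUninorm op)
    (h22 : ∀ x₁ ∈ Icc (0:ℝ) 1, ∀ x₂ ∈ Icc (0:ℝ) 1, ∀ y₁ ∈ Icc (0:ℝ) 1, ∀ y₂ ∈ Icc (0:ℝ) 1,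
      x₁ ≤ x₂ → y₁ ≤ y₂ → op (ot x₁ y₂) (ot x₂ y₁) ≤ op (ot x₁ y₁) (ot x₂ y₂)) :
    RearrangementIneq ot op := by
  have : Fact (IsUninorm op) := ⟨hop⟩
  let F (a b : UninormMonoid op) : UninormMonoid op := ⟨ot a.val b.val, hot _ a.mem _ b.mem⟩
  have hF : HasIncreasingDifferences F := fun a b hab c d hcd =>
    h22 _ a.mem _ b.mem _ c.mem _ d.mem hab hcd
  intro n x y hx hy hxI hyI σ
  let X i : UninormMonoid op := ⟨x i, hxI i⟩
  let Y i : UninormMonoid op := ⟨y i, hyI i⟩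
  have hX : Monotone X := fun _ _ h => hx h
  have hY : Monotone Y := fun _ _ h => hy h
  have hprod (f : Fin (n + 1) → Fin (n + 1)) :
      iterOp op n (fun i => ot (x (f i)) (y i)) = (∏ i, F (X (f i)) (Y i)).val :=
    iterOp_map_eq_prod UninormMonoid.val_mul n fun i => F (X (f i)) (Y i)
  rw [hprod Fin.rev, hprod σ,
    show (fun i => ot (x i) (y i)) = fun i => ot (x (id i)) (y i) from rfl, hprod id]
  exact ⟨hF.prod_comp_rev_le_prod_comp_perm hX hY σ, hF.prod_comp_perm_le_prod hX hY σ⟩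

theorem rearrangement_iff_two_by_two (ot op : ℝ → ℝ → ℝ)
    (hot : IsUninorm ot) (hop : IsUninorm op) :
    RearrangementIneq ot op ↔
      ∀ x₁ ∈ Icc (0:ℝ) 1, ∀ x₂ ∈ Icc (0:ℝ) 1, ∀ y₁ ∈ Icc (0:ℝ) 1, ∀ y₂ ∈ Icc (0:ℝ) 1,
        x₁ ≤ x₂ → y₁ ≤ y₂ →
          op (ot x₁ y₂) (ot x₂ y₁) ≤ op (ot x₁ y₁) (ot x₂ y₂) := by
  refine ⟨fun hR x₁ hx₁ x₂ hx₂ y₁ hy₁ y₂ hy₂ hx hy => ?_,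
    rearrangementIneq_of_two_by_two hot.1 hop⟩
  have key := (hR 1 ![x₁, x₂] ![y₁, y₂] (monotone_vecEmpty.vecCons hx)
    (monotone_vecEmpty.vecCons hy) (Fin.forall_fin_two.2 ⟨hx₁, hx₂⟩)
    (Fin.forall_fin_two.2 ⟨hy₁, hy₂⟩) (swap 0 1)).2
  change op (ot x₂ y₁) (ot x₁ y₂) ≤ op (ot x₁ y₁) (ot x₂ y₂) at key
  rw [hop.2.1 _ (hot.1 _ hx₁ _ hy₂) _ (hot.1 _ hx₂ _ hy₁)]
  exact key
end

section
/- Let ⊗ and ⊕ be uninorms on [0,1] and ¬ a strong negation (a strictly decreasing involutive function on [0,1] with ¬0=1, ¬1=0). Define the duals ⊗̃ = Φ^¬(⊕) and ⊕̃ = Φ^¬(⊗) by Φ^¬(f)(x,y) = ¬f(¬x,¬y). Then (⊗, ⊕) satisfies the rearrangement inequality if and only if (Φ^¬(⊕), Φ^¬(⊗)) satisfies the dual rearrangement inequality. -/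
/-!
Negation turns an iterated dual operation into the negation of the original iterated operation:
`⊗̃ᵢ (xᵢ ⊕̃ yᵢ) = ¬ ⊕ᵢ (¬xᵢ ⊗ ¬yᵢ)`. The sequences `¬xᵢ`, `¬yᵢ` are antitone, so after reversing
the index (allowed because the iterated uninorm is a commutative monoid product) they are again
monotone, the permutation `σ` becomes `rev ∘ σ ∘ rev`, the identity and the reversal stay put,
and the antitone `¬` swaps the two inequalities of the rearrangement inequality into those of the
dual one. As `x ↦ ¬ ∘ x ∘ rev` is an involution, this matches the two statements exactly.
-/

open Set

def IsStrongNegation (neg : ℝ → ℝ) : Prop :=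
  (∀ x ∈ Icc (0:ℝ) 1, neg x ∈ Icc (0:ℝ) 1) ∧
  StrictAntiOn neg (Icc (0:ℝ) 1) ∧
  neg 0 = 1 ∧ neg 1 = 0 ∧
  (∀ x ∈ Icc (0:ℝ) 1, neg (neg x) = x)

def dualOp (neg : ℝ → ℝ) (f : ℝ → ℝ → ℝ) : ℝ → ℝ → ℝ :=
  fun x y => neg (f (neg x) (neg y))

lemma iterOp_mem_Icc {f : ℝ → ℝ → ℝ}
    (hf : ∀ x ∈ Icc (0:ℝ) 1, ∀ y ∈ Icc (0:ℝ) 1, f x y ∈ Icc (0:ℝ) 1) :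
    ∀ (n : ℕ) (v : Fin (n+1) → ℝ), (∀ i, v i ∈ Icc (0:ℝ) 1) → iterOp f n v ∈ Icc (0:ℝ) 1
  | 0, _, hv => hv 0
  | n+1, _, hv => hf _ (iterOp_mem_Icc hf n _ fun _ => hv _) _ (hv _)

namespace IsUninorm

variable {f : ℝ → ℝ → ℝ}

/-- `Icc 0 1` without the multiplicative structure it carries as `unitInterval`. -/
def Carrier : Type := Icc (0:ℝ) 1

noncomputable abbrev commMonoid (hf : IsUninorm f) : CommMonoid Carrier where
  mul a b := (⟨f a.1 b.1, hf.1 _ a.2 _ b.2⟩ : Icc (0:ℝ) 1)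
  one := (⟨hf.2.2.2.2.choose, hf.2.2.2.2.choose_spec.1⟩ : Icc (0:ℝ) 1)
  mul_assoc a b c := Subtype.ext (hf.2.2.1 _ a.2 _ b.2 _ c.2)
  mul_comm a b := Subtype.ext (hf.2.1 _ a.2 _ b.2)
  mul_one a := Subtype.ext (hf.2.2.2.2.choose_spec.2 _ a.2)
  one_mul a := Subtype.ext <| by
    change f hf.2.2.2.2.choose a.1 = a.1
    rw [hf.2.1 _ hf.2.2.2.2.choose_spec.1 _ a.2, hf.2.2.2.2.choose_spec.2 _ a.2]

lemma iterOp_eq_prod (hf : IsUninorm f) (n : ℕ) (v : Fin (n+1) → Carrier) :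
    iterOp f n (fun i => (v i).1) = (@Finset.prod _ _ hf.commMonoid Finset.univ v).1 := by
  let := hf.commMonoid
  induction n with
  | zero => rw [Fin.prod_univ_one]; rfl
  | succ n ih =>
    rw [Fin.prod_univ_castSucc]
    exact congrArg (f · (v (Fin.last (n+1))).1) (ih fun i => v i.castSucc)

lemma iterOp_comp_perm (hf : IsUninorm f) (n : ℕ) (v : Fin (n+1) → ℝ)
    (hv : ∀ i, v i ∈ Icc (0:ℝ) 1) (e : Equiv.Perm (Fin (n+1))) :
    iterOp f n (fun i => v (e i)) = iterOp f n v := by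
  let := hf.commMonoid
  let w : Fin (n+1) → Carrier := fun j => (⟨v j, hv j⟩ : Icc (0:ℝ) 1)
  calc iterOp f n (fun i => v (e i)) = (∏ i, w (e i)).1 := hf.iterOp_eq_prod n (w ∘ e)
    _ = (∏ i, w i).1 := by rw [Equiv.prod_comp e w]
    _ = iterOp f n v := (hf.iterOp_eq_prod n w).symm

end IsUninorm

namespace IsStrongNegation

variable {neg : ℝ → ℝ}

lemma iterOp_dualOp (hneg : IsStrongNegation neg) {f : ℝ → ℝ → ℝ}
    (hf : ∀ x ∈ Icc (0:ℝ) 1, ∀ y ∈ Icc (0:ℝ) 1, f x y ∈ Icc (0:ℝ) 1) :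
    ∀ (n : ℕ) (v : Fin (n+1) → ℝ), (∀ i, v i ∈ Icc (0:ℝ) 1) →
      iterOp (dualOp neg f) n (fun i => neg (v i)) = neg (iterOp f n v)
  | 0, _, _ => rfl
  | n+1, v, hv => by
    change neg (f (neg (iterOp (dualOp neg f) n fun i => neg (v i.castSucc)))
      (neg (neg (v (Fin.last (n+1)))))) = _
    rw [hneg.iterOp_dualOp hf n _ fun _ => hv _,
      hneg.2.2.2.2 _ (iterOp_mem_Icc hf n _ fun _ => hv _), hneg.2.2.2.2 _ (hv _)]
    rfl

def negRev (neg : ℝ → ℝ) {n : ℕ} (x : Fin (n+1) → ℝ) : Fin (n+1) → ℝ :=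
  fun i => neg (x i.rev)

lemma negRev_mem (hneg : IsStrongNegation neg) {n : ℕ} {x : Fin (n+1) → ℝ}
    (hx : ∀ i, x i ∈ Icc (0:ℝ) 1) (i : Fin (n+1)) : negRev neg x i ∈ Icc (0:ℝ) 1 :=
  hneg.1 _ (hx _)

lemma monotone_negRev (hneg : IsStrongNegation neg) {n : ℕ} {x : Fin (n+1) → ℝ}
    (hxm : Monotone x) (hx : ∀ i, x i ∈ Icc (0:ℝ) 1) : Monotone (negRev neg x) :=
  fun _ _ hij => hneg.2.1.antitoneOn (hx _) (hx _) (hxm (Fin.rev_le_rev.mpr hij))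

lemma negRev_negRev (hneg : IsStrongNegation neg) {n : ℕ} {x : Fin (n+1) → ℝ}
    (hx : ∀ i, x i ∈ Icc (0:ℝ) 1) : negRev neg (negRev neg x) = x :=
  funext fun i => by simp only [negRev, Fin.rev_rev, hneg.2.2.2.2 _ (hx i)]

variable {ot op : ℝ → ℝ → ℝ}

lemma iterOp_dualOp_dualOp (hneg : IsStrongNegation neg)
    (hot : ∀ x ∈ Icc (0:ℝ) 1, ∀ y ∈ Icc (0:ℝ) 1, ot x y ∈ Icc (0:ℝ) 1) (hop : IsUninorm op)
    {n : ℕ} {u v : Fin (n+1) → ℝ} (hu : ∀ i, u i ∈ Icc (0:ℝ) 1) (hv : ∀ i, v i ∈ Icc (0:ℝ) 1) :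
    iterOp (dualOp neg op) n (fun i => dualOp neg ot (u i) (v i)) =
      neg (iterOp op n fun i => ot (neg (u i.rev)) (neg (v i.rev))) := by
  have hmem : ∀ i, ot (neg (u i)) (neg (v i)) ∈ Icc (0:ℝ) 1 :=
    fun i => hot _ (hneg.1 _ (hu i)) _ (hneg.1 _ (hv i))
  change iterOp _ n (fun i => neg (ot (neg (u i)) (neg (v i)))) = _
  rw [hneg.iterOp_dualOp hop.1 n _ hmem, ← hop.iterOp_comp_perm n _ hmem Fin.revPerm]
  rfl

end IsStrongNegation

def RearrangementIneqAt (ot op : ℝ → ℝ → ℝ) {n : ℕ} (x y : Fin (n+1) → ℝ)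
    (σ : Equiv.Perm (Fin (n+1))) : Prop :=
  iterOp op n (fun i => ot (x i.rev) (y i)) ≤ iterOp op n (fun i => ot (x (σ i)) (y i)) ∧
    iterOp op n (fun i => ot (x (σ i)) (y i)) ≤ iterOp op n (fun i => ot (x i) (y i))

def DualRearrangementIneqAt (ot op : ℝ → ℝ → ℝ) {n : ℕ} (x y : Fin (n+1) → ℝ)
    (σ : Equiv.Perm (Fin (n+1))) : Prop :=
  iterOp ot n (fun i => op (x i) (y i)) ≤ iterOp ot n (fun i => op (x (σ i)) (y i)) ∧
    iterOp ot n (fun i => op (x (σ i)) (y i)) ≤ iterOp ot n (fun i => op (x i.rev) (y i))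

open IsStrongNegation in
lemma dualRearrangementIneqAt_dualOp_iff {ot op : ℝ → ℝ → ℝ} {neg : ℝ → ℝ}
    (hneg : IsStrongNegation neg)
    (hot : ∀ x ∈ Icc (0:ℝ) 1, ∀ y ∈ Icc (0:ℝ) 1, ot x y ∈ Icc (0:ℝ) 1) (hop : IsUninorm op)
    {n : ℕ} {x y : Fin (n+1) → ℝ} (hx : ∀ i, x i ∈ Icc (0:ℝ) 1) (hy : ∀ i, y i ∈ Icc (0:ℝ) 1)
    (σ : Equiv.Perm (Fin (n+1))) :
    DualRearrangementIneqAt (dualOp neg op) (dualOp neg ot) x y σ ↔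
      RearrangementIneqAt ot op (negRev neg x) (negRev neg y) (Fin.revPerm.permCongr σ) := by
  have hmem (π : Fin (n+1) → Fin (n+1)) :
      iterOp op n (fun i => ot (neg (x (π i))) (neg (y i.rev))) ∈ Icc (0:ℝ) 1 :=
    iterOp_mem_Icc hop.1 n _ fun _ => hot _ (hneg.1 _ (hx _)) _ (hneg.1 _ (hy _))
  rw [DualRearrangementIneqAt, hneg.iterOp_dualOp_dualOp hot hop hx hy,
    hneg.iterOp_dualOp_dualOp hot hop (fun i => hx (σ i)) hy,
    hneg.iterOp_dualOp_dualOp hot hop (fun i => hx i.rev) hy,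
    hneg.2.1.le_iff_ge (hmem _) (hmem _), hneg.2.1.le_iff_ge (hmem _) (hmem _), and_comm]
  simp only [RearrangementIneqAt, negRev, Equiv.permCongr_apply, Fin.revPerm_symm,
    Fin.revPerm_apply, Fin.rev_rev]

theorem rearrangement_iff_dual_rearrangement (ot op : ℝ → ℝ → ℝ) (neg : ℝ → ℝ)
    (hot : IsUninorm ot) (hop : IsUninorm op) (hneg : IsStrongNegation neg) :
    RearrangementIneq ot op ↔
      DualRearrangementIneq (dualOp neg op) (dualOp neg ot) := by
  have transfer := @dualRearrangementIneqAt_dualOp_iff ot op neg hneg hot.1 hop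
  constructor
  · intro h n x y hxm hym hx hy σ
    exact (transfer hx hy σ).2 <| h n _ _ (hneg.monotone_negRev hxm hx)
      (hneg.monotone_negRev hym hy) (hneg.negRev_mem hx) (hneg.negRev_mem hy) _
  · intro h n x y hxm hym hx hy σ
    have hσ : Fin.revPerm.permCongr (Fin.revPerm.permCongr σ) = σ := by ext; simp
    have := (transfer (hneg.negRev_mem hx) (hneg.negRev_mem hy) _).1 <|
      h n _ _ (hneg.monotone_negRev hxm hx) (hneg.monotone_negRev hym hy)
        (hneg.negRev_mem hx) (hneg.negRev_mem hy) (Fin.revPerm.permCongr σ)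
    rwa [hneg.negRev_negRev hx, hneg.negRev_negRev hy, hσ] at this
end

section
/- If f is a T-norm with an additive generator μ such that for all 0 ≤ x ≤ y ≤ 1 and all h ≥ 0 with y + h ≤ 1, μ(x) − μ(x+h) ≥ μ(y) − μ(y+h), then f satisfies property A. -/
open Set ENNReal

def IsTnorm (f : ℝ → ℝ → ℝ) : Prop :=
  (∀ x ∈ Icc (0:ℝ) 1, ∀ y ∈ Icc (0:ℝ) 1, f x y ∈ Icc (0:ℝ) 1) ∧
  (∀ x ∈ Icc (0:ℝ) 1, ∀ y ∈ Icc (0:ℝ) 1, f x y = f y x) ∧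
  (∀ x ∈ Icc (0:ℝ) 1, ∀ y ∈ Icc (0:ℝ) 1, ∀ z ∈ Icc (0:ℝ) 1, f (f x y) z = f x (f y z)) ∧
  (∀ x ∈ Icc (0:ℝ) 1, ∀ y ∈ Icc (0:ℝ) 1, ∀ z ∈ Icc (0:ℝ) 1, x ≤ y → f x z ≤ f y z) ∧
  (∀ x ∈ Icc (0:ℝ) 1, f x 1 = x)

def PropA (f : ℝ → ℝ → ℝ) : Prop :=
  ∀ x y z w : ℝ, 0 ≤ x → x ≤ y → y ≤ z → z ≤ w → w ≤ 1 →
    w + x ≤ y + z → f x w ≤ f y z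

def PropB (f : ℝ → ℝ → ℝ) : Prop :=
  ∀ x y z w : ℝ, 0 ≤ x → x ≤ y → y ≤ 1 → 0 ≤ z → z ≤ w → w ≤ 1 →
    f x w - f x z ≤ f y w - f y z

/-- `μ` is an additive generator of the T-norm `f`, with pseudo-inverse `μinv`. -/
def IsAdditiveGenerator (f : ℝ → ℝ → ℝ) (μ : ℝ → ℝ≥0∞) (μinv : ℝ≥0∞ → ℝ) : Prop :=
  StrictAntiOn μ (Icc (0:ℝ) 1) ∧
  ContinuousWithinAt μ (Icc (0:ℝ) 1) 0 ∧
  μ 1 = 0 ∧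
  Antitone μinv ∧
  (∀ x ∈ Icc (0:ℝ) 1, μinv (μ x) = x) ∧
  (∀ x ∈ Icc (0:ℝ) 1, ∀ y ∈ Icc (0:ℝ) 1,
    (μ x + μ y ∈ μ '' (Icc (0:ℝ) 1) ∪ Ici (μ 0)) ∧ f x y = μinv (μ x + μ y))

/-- `μ(z) - μ(w)` is the decrease of `μ` over `[z, w]`; shifting that interval down to `[x, x + (w - z)]`
can only increase it, and `x + (w - z) ≤ y` then bounds it by `μ(x) - μ(y)`. -/
theorem add_le_add_of_antitoneOn_of_decreasing_differences {μ : ℝ → ℝ≥0∞}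
    (hanti : AntitoneOn μ (Icc 0 1))
    (hdiff : ∀ x y h : ℝ, 0 ≤ x → x ≤ y → y ≤ 1 → 0 ≤ h → y + h ≤ 1 →
      μ y - μ (y + h) ≤ μ x - μ (x + h))
    {x y z w : ℝ} (hx : 0 ≤ x) (hxy : x ≤ y) (hyz : y ≤ z) (hzw : z ≤ w) (hw : w ≤ 1)
    (hsum : w + x ≤ y + z) :
    μ y + μ z ≤ μ x + μ w := by
  have hyI : y ∈ Icc (0 : ℝ) 1 := ⟨by linarith, by linarith⟩
  have hshift : μ z - μ w ≤ μ x - μ (x + (w - z)) := by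
    simpa using hdiff x z (w - z) hx (by linarith) (by linarith) (by linarith) (by linarith)
  have hy_le : μ y ≤ μ (x + (w - z)) :=
    hanti ⟨by linarith, by linarith⟩ hyI (by linarith)
  have hz_le : μ z ≤ μ x - μ y + μ w :=
    tsub_le_iff_right.1 (hshift.trans (tsub_le_tsub_left hy_le _))
  calc μ y + μ z ≤ μ y + (μ x - μ y + μ w) := by gcongr
    _ = μ x + μ w := by
      rw [← add_assoc, add_tsub_cancel_of_le (hanti ⟨hx, by linarith⟩ hyI hxy)]

theorem propA_of_generator_decreasing_differences_general (f : ℝ → ℝ → ℝ)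
    (μ : ℝ → ℝ≥0∞) (μinv : ℝ≥0∞ → ℝ)
    (hgen : IsAdditiveGenerator f μ μinv)
    (hdiff : ∀ x y h : ℝ, 0 ≤ x → x ≤ y → y ≤ 1 → 0 ≤ h → y + h ≤ 1 →
      μ y - μ (y + h) ≤ μ x - μ (x + h)) :
    PropA f := by
  obtain ⟨hstrict, -, -, hinv_anti, -, hgen⟩ := hgen
  intro x y z w hx hxy hyz hzw hw hsum
  rw [(hgen x ⟨hx, by linarith⟩ w ⟨by linarith, hw⟩).2,
    (hgen y ⟨by linarith, by linarith⟩ z ⟨by linarith, by linarith⟩).2]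
  exact hinv_anti <|
    add_le_add_of_antitoneOn_of_decreasing_differences hstrict.antitoneOn hdiff hx hxy hyz hzw hw hsum

theorem propA_of_generator_decreasing_differences (f : ℝ → ℝ → ℝ)
    (μ : ℝ → ℝ≥0∞) (μinv : ℝ≥0∞ → ℝ)
    (hf : IsTnorm f) (hgen : IsAdditiveGenerator f μ μinv)
    (hdiff : ∀ x y h : ℝ, 0 ≤ x → x ≤ y → y ≤ 1 → 0 ≤ h → y + h ≤ 1 →
      μ y - μ (y + h) ≤ μ x - μ (x + h)) :
    PropA f :=
  propA_of_generator_decreasing_differences_general f μ μinv hgen hdiff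
end

section
/- If f is a T-norm with a convex (equivalently, with the stated decreasing-difference condition) additive generator μ, i.e., f is an Archimedean copula, then f satisfies both property A and property B. -/
open Set ENNReal

/-! Convexity of `μ` says `μ y + μ (x + h) ≤ μ x + μ (y + h)` for `x ≤ y`. Property A is this
inequality with `h = w - z`, combined with the antitonicity of `μ` and of its pseudo-inverse.
For Property B, put `s = f x z`, `q = f y z`, `p = f y w`: as long as `μ y + μ z < μ 0` the
generator is additive on these values, and convexity at `s ≤ q` with step `p - q` gives
`μ (s + p - q) ≤ μ x + μ w`, i.e. `f x w ≤ s + p - q`. Otherwise `f x z = f y z = 0` and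
Property B reduces to monotonicity. -/

/-- Convexity of a generator, in a form free of truncated subtraction in `ℝ≥0∞`. -/
def HasConvexIncrements (μ : ℝ → ℝ≥0∞) : Prop :=
  ∀ x y h : ℝ, 0 ≤ x → x ≤ y → y ≤ 1 → 0 ≤ h → y + h ≤ 1 →
    μ y + μ (x + h) ≤ μ x + μ (y + h)

theorem add_le_add_of_tsub_le_tsub {α : Type*} [AddCommMonoid α] [PartialOrder α]
    [CanonicallyOrderedAdd α] [Sub α] [OrderedSub α] [IsOrderedAddMonoid α] {a b c d : α}
    (hdc : d ≤ c) (h : a - b ≤ c - d) : a + d ≤ c + b :=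
  calc a + d ≤ (c - d + b) + d := add_le_add_left (tsub_le_iff_right.mp h) d
    _ = c + b := by rw [add_right_comm, tsub_add_cancel_of_le hdc]

theorem hasConvexIncrements_of_tsub_le_tsub {μ : ℝ → ℝ≥0∞} (hμ : AntitoneOn μ (Icc 0 1))
    (hconvex : ∀ x y h : ℝ, 0 ≤ x → x ≤ y → y ≤ 1 → 0 ≤ h → y + h ≤ 1 →
      μ y - μ (y + h) ≤ μ x - μ (x + h)) :
    HasConvexIncrements μ := fun x y h hx hxy hy1 hh hyh =>
  add_le_add_of_tsub_le_tsub
    (hμ ⟨hx, by linarith⟩ ⟨by linarith, by linarith⟩ (by linarith))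
    (hconvex x y h hx hxy hy1 hh hyh)

namespace IsAdditiveGenerator

variable {f : ℝ → ℝ → ℝ} {μ : ℝ → ℝ≥0∞} {μinv : ℝ≥0∞ → ℝ}
  (hg : IsAdditiveGenerator f μ μinv) {x y z w : ℝ}
include hg

theorem antitoneOn : AntitoneOn μ (Icc 0 1) := hg.1.antitoneOn

theorem apply_eq (hx : x ∈ Icc (0:ℝ) 1) (hy : y ∈ Icc (0:ℝ) 1) :
    f x y = μinv (μ x + μ y) :=
  (hg.2.2.2.2.2 x hx y hy).2

theorem apply_le_of_le_add (hx : x ∈ Icc (0:ℝ) 1) (hy : y ∈ Icc (0:ℝ) 1)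
    (hz : z ∈ Icc (0:ℝ) 1) (h : μ z ≤ μ x + μ y) : f x y ≤ z := by
  rw [hg.apply_eq hx hy, ← hg.2.2.2.2.1 z hz]
  exact hg.2.2.2.1 h

theorem apply_le_apply_of_add_le (hx : x ∈ Icc (0:ℝ) 1) (hy : y ∈ Icc (0:ℝ) 1)
    (hz : z ∈ Icc (0:ℝ) 1) (hw : w ∈ Icc (0:ℝ) 1) (h : μ y + μ z ≤ μ x + μ w) :
    f x w ≤ f y z := by
  rw [hg.apply_eq hx hw, hg.apply_eq hy hz]
  exact hg.2.2.2.1 h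

theorem apply_nonpos_of_le_add (hx : x ∈ Icc (0:ℝ) 1) (hy : y ∈ Icc (0:ℝ) 1)
    (h : μ 0 ≤ μ x + μ y) : f x y ≤ 0 :=
  hg.apply_le_of_le_add hx hy ⟨le_rfl, zero_le_one⟩ h

theorem map_apply_of_add_lt (hx : x ∈ Icc (0:ℝ) 1) (hy : y ∈ Icc (0:ℝ) 1)
    (h : μ x + μ y < μ 0) : μ (f x y) = μ x + μ y := by
  rcases (hg.2.2.2.2.2 x hx y hy).1 with ⟨t, ht, hμt⟩ | hge
  · rw [hg.apply_eq hx hy, ← hμt, hg.2.2.2.2.1 t ht]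
  · exact absurd hge h.not_ge

theorem map_apply_le_add (hx : x ∈ Icc (0:ℝ) 1) (hy : y ∈ Icc (0:ℝ) 1)
    (hnonneg : 0 ≤ f x y) : μ (f x y) ≤ μ x + μ y := by
  by_cases h : μ x + μ y < μ 0
  · exact (hg.map_apply_of_add_lt hx hy h).le
  · rw [le_antisymm (hg.apply_nonpos_of_le_add hx hy (not_lt.mp h)) hnonneg]
    exact not_lt.mp h

theorem propA (hconv : HasConvexIncrements μ) : PropA f := by
  intro x y z w hx hxy hyz hzw hw1 hsum
  have hmid : μ z + μ (x + (w - z)) ≤ μ x + μ w := by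
    simpa using hconv x z (w - z) hx (by linarith) (by linarith) (by linarith) (by linarith)
  have hy : μ y ≤ μ (x + (w - z)) :=
    hg.antitoneOn ⟨by linarith, by linarith⟩ ⟨by linarith, by linarith⟩ (by linarith)
  refine hg.apply_le_apply_of_add_le ⟨hx, by linarith⟩ ⟨by linarith, by linarith⟩
    ⟨by linarith, by linarith⟩ ⟨by linarith, hw1⟩ ?_
  calc μ y + μ z ≤ μ z + μ (x + (w - z)) := by rw [add_comm]; gcongr
    _ ≤ μ x + μ w := hmid

variable (hrange : ∀ x ∈ Icc (0:ℝ) 1, ∀ y ∈ Icc (0:ℝ) 1, f x y ∈ Icc (0:ℝ) 1)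
  (hconv : HasConvexIncrements μ)
include hrange hconv

theorem apply_sub_apply_le_of_add_lt (hx : x ∈ Icc (0:ℝ) 1) (hy : y ∈ Icc (0:ℝ) 1)
    (hz : z ∈ Icc (0:ℝ) 1) (hw : w ∈ Icc (0:ℝ) 1) (hxy : x ≤ y) (hzw : z ≤ w)
    (hfin : μ y + μ z < μ 0) : f x w - f x z ≤ f y w - f y z := by
  set s := f x z
  set q := f y z
  set p := f y w
  have hμy : μ y ≤ μ x := hg.antitoneOn hx hy hxy
  have hμw : μ w ≤ μ z := hg.antitoneOn hz hw hzw
  have hsq : s ≤ q := hg.apply_le_apply_of_add_le hx hy hz hz (by gcongr)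
  have hqp : q ≤ p := hg.apply_le_apply_of_add_le hy hy hw hz (by gcongr)
  have hs := hrange x hx z hz
  have hp := hrange y hy w hw
  have hμq : μ q = μ y + μ z := hg.map_apply_of_add_lt hy hz hfin
  have hμp : μ p = μ y + μ w :=
    hg.map_apply_of_add_lt hy hw ((add_le_add_right hμw _).trans_lt hfin)
  have hstep := hconv s q (p - q) hs.1 hsq (by linarith [hp.2]) (by linarith) (by linarith [hp.2])
  rw [add_sub_cancel, hμq, hμp] at hstep
  have hfin' : μ y + μ z ≠ ∞ := ne_top_of_lt hfin
  have hle : μ (s + (p - q)) ≤ μ x + μ w := by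
    rw [← ENNReal.add_le_add_iff_left hfin']
    calc μ y + μ z + μ (s + (p - q)) ≤ μ s + (μ y + μ w) := hstep
      _ ≤ μ x + μ z + (μ y + μ w) := by gcongr; exact hg.map_apply_le_add hx hz hs.1
      _ = μ y + μ z + (μ x + μ w) := by ring
  have := hg.apply_le_of_le_add hx hw ⟨by linarith [hs.1], by linarith [hp.2]⟩ hle
  linarith

theorem propB : PropB f := by
  intro x y z w hx hxy hy1 hz hzw hw1
  have hxI : x ∈ Icc (0:ℝ) 1 := ⟨hx, by linarith⟩
  have hyI : y ∈ Icc (0:ℝ) 1 := ⟨by linarith, hy1⟩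
  have hzI : z ∈ Icc (0:ℝ) 1 := ⟨hz, by linarith⟩
  have hwI : w ∈ Icc (0:ℝ) 1 := ⟨by linarith, hw1⟩
  by_cases hfin : μ y + μ z < μ 0
  · exact hg.apply_sub_apply_le_of_add_lt hrange hconv hxI hyI hzI hwI hxy hzw hfin
  · have hyz : f y z = 0 :=
      le_antisymm (hg.apply_nonpos_of_le_add hyI hzI (not_lt.mp hfin)) (hrange y hyI z hzI).1
    have hxz : f x z = 0 := le_antisymm
      (hg.apply_nonpos_of_le_add hxI hzI
        ((not_lt.mp hfin).trans (by gcongr; exact hg.antitoneOn hxI hyI hxy)))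
      (hrange x hxI z hzI).1
    rw [hyz, hxz, sub_zero, sub_zero]
    exact hg.apply_le_apply_of_add_le hxI hyI hwI hwI (by gcongr; exact hg.antitoneOn hxI hyI hxy)

end IsAdditiveGenerator

/-- An Archimedean copula, i.e. a T-norm with a convex additive generator (equivalently,
a generator satisfying the decreasing-difference condition), satisfies properties A and B. -/
theorem propA_and_propB_of_convex_generator (f : ℝ → ℝ → ℝ)
    (μ : ℝ → ℝ≥0∞) (μinv : ℝ≥0∞ → ℝ)
    (hf : IsTnorm f) (hgen : IsAdditiveGenerator f μ μinv)
    (hconvex : ∀ x y h : ℝ, 0 ≤ x → x ≤ y → y ≤ 1 → 0 ≤ h → y + h ≤ 1 →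
      μ y - μ (y + h) ≤ μ x - μ (x + h)) :
    PropA f ∧ PropB f := by
  have hconv : HasConvexIncrements μ :=
    hasConvexIncrements_of_tsub_le_tsub hgen.antitoneOn hconvex
  exact ⟨hgen.propA hconv, hgen.propB hf.1 hconv⟩
end

section
/- If a binary operation ⊗ on [0,1] satisfies property B and a binary operation ⊕ on [0,1] satisfies property A', then for all 0 ≤ x₁ ≤ x₂ ≤ 1 and 0 ≤ y₁ ≤ y₂ ≤ 1, (x₁⊗y₁) ⊕ (x₂⊗y₂) ≥ (x₁⊗y₂) ⊕ (x₂⊗y₁). -/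
/-!
With `a = x₁ ⊗ y₁`, `b = x₁ ⊗ y₂`, `c = x₂ ⊗ y₁`, `d = x₂ ⊗ y₂`, property B says `b + c ≤ a + d`
and monotonicity of `⊗` gives `a ≤ b` and `a ≤ c`. These force `b, c ≤ d`, so `a ≤ min b c ≤ max b c ≤ d`
and property A' compares `a ⊕ d` with `b ⊕ c`, up to the commutativity of `⊕`.
-/

open Set

def PropA' (f : ℝ → ℝ → ℝ) : Prop :=
  ∀ x y z w : ℝ, 0 ≤ x → x ≤ y → y ≤ z → z ≤ w → w ≤ 1 →
    w + x ≥ y + z → f x w ≥ f y z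

theorem le_apply_right_of_comm {f : ℝ → ℝ → ℝ}
    (hcomm : ∀ x ∈ Icc (0:ℝ) 1, ∀ y ∈ Icc (0:ℝ) 1, f x y = f y x)
    (hmono : ∀ x ∈ Icc (0:ℝ) 1, ∀ y ∈ Icc (0:ℝ) 1, ∀ z ∈ Icc (0:ℝ) 1, x ≤ y → f x z ≤ f y z)
    {x y z : ℝ} (hx : x ∈ Icc (0:ℝ) 1) (hy : y ∈ Icc (0:ℝ) 1) (hz : z ∈ Icc (0:ℝ) 1) (hyz : y ≤ z) :
    f x y ≤ f x z := by
  rw [hcomm x hx y hy, hcomm x hx z hz]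
  exact hmono y hy z hz x hx hyz

theorem PropB.add_le_add {f : ℝ → ℝ → ℝ} (hB : PropB f) {x₁ x₂ y₁ y₂ : ℝ}
    (hx₁ : 0 ≤ x₁) (hx : x₁ ≤ x₂) (hx₂ : x₂ ≤ 1) (hy₁ : 0 ≤ y₁) (hy : y₁ ≤ y₂) (hy₂ : y₂ ≤ 1) :
    f x₁ y₂ + f x₂ y₁ ≤ f x₁ y₁ + f x₂ y₂ := by
  linarith [hB x₁ x₂ y₁ y₂ hx₁ hx hx₂ hy₁ hy hy₂]

theorem PropA'.apply_le_of_add_le {f : ℝ → ℝ → ℝ} (hA' : PropA' f)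
    (hcomm : ∀ x ∈ Icc (0:ℝ) 1, ∀ y ∈ Icc (0:ℝ) 1, f x y = f y x)
    {a b c d : ℝ} (ha : 0 ≤ a) (hab : a ≤ b) (hac : a ≤ c) (hd : d ≤ 1) (hsum : b + c ≤ a + d) :
    f b c ≤ f a d := by
  have hbd : b ≤ d := by linarith
  have hcd : c ≤ d := by linarith
  rcases le_total b c with hbc | hcb
  · exact hA' a b c d ha hab hbc hcd hd (by linarith)
  · rw [hcomm b ⟨ha.trans hab, hbd.trans hd⟩ c ⟨ha.trans hac, hcd.trans hd⟩]
    exact hA' a c b d ha hac hcb hbd hd (by linarith)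

theorem rearrangement_condition_of_propB_propA'_general
    (ot op : ℝ → ℝ → ℝ)
    (hmapsOt : ∀ x ∈ Icc (0:ℝ) 1, ∀ y ∈ Icc (0:ℝ) 1, ot x y ∈ Icc (0:ℝ) 1)
    (hcommOt : ∀ x ∈ Icc (0:ℝ) 1, ∀ y ∈ Icc (0:ℝ) 1, ot x y = ot y x)
    (hcommOp : ∀ x ∈ Icc (0:ℝ) 1, ∀ y ∈ Icc (0:ℝ) 1, op x y = op y x)
    (hmonoOt : ∀ x ∈ Icc (0:ℝ) 1, ∀ y ∈ Icc (0:ℝ) 1, ∀ z ∈ Icc (0:ℝ) 1, x ≤ y → ot x z ≤ ot y z)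
    (hB : PropB ot) (hA' : PropA' op) :
    ∀ x₁ x₂ y₁ y₂ : ℝ, 0 ≤ x₁ → x₁ ≤ x₂ → x₂ ≤ 1 → 0 ≤ y₁ → y₁ ≤ y₂ → y₂ ≤ 1 →
      op (ot x₁ y₂) (ot x₂ y₁) ≤ op (ot x₁ y₁) (ot x₂ y₂) := by
  intro x₁ x₂ y₁ y₂ hx₁ hx hx₂ hy₁ hy hy₂
  have hx₁m : x₁ ∈ Icc (0:ℝ) 1 := ⟨hx₁, hx.trans hx₂⟩
  have hx₂m : x₂ ∈ Icc (0:ℝ) 1 := ⟨hx₁.trans hx, hx₂⟩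
  have hy₁m : y₁ ∈ Icc (0:ℝ) 1 := ⟨hy₁, hy.trans hy₂⟩
  have hy₂m : y₂ ∈ Icc (0:ℝ) 1 := ⟨hy₁.trans hy, hy₂⟩
  exact hA'.apply_le_of_add_le hcommOp (hmapsOt x₁ hx₁m y₁ hy₁m).1
    (le_apply_right_of_comm hcommOt hmonoOt hx₁m hy₁m hy₂m hy)
    (hmonoOt x₁ hx₁m x₂ hx₂m y₁ hy₁m hx) (hmapsOt x₂ hx₂m y₂ hy₂m).2
    (hB.add_le_add hx₁ hx hx₂ hy₁ hy hy₂)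

theorem rearrangement_condition_of_propB_propA'
    (ot op : ℝ → ℝ → ℝ)
    (hmapsOt : ∀ x ∈ Icc (0:ℝ) 1, ∀ y ∈ Icc (0:ℝ) 1, ot x y ∈ Icc (0:ℝ) 1)
    (hmapsOp : ∀ x ∈ Icc (0:ℝ) 1, ∀ y ∈ Icc (0:ℝ) 1, op x y ∈ Icc (0:ℝ) 1)
    (hcommOt : ∀ x ∈ Icc (0:ℝ) 1, ∀ y ∈ Icc (0:ℝ) 1, ot x y = ot y x)
    (hcommOp : ∀ x ∈ Icc (0:ℝ) 1, ∀ y ∈ Icc (0:ℝ) 1, op x y = op y x)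
    (hmonoOt : ∀ x ∈ Icc (0:ℝ) 1, ∀ y ∈ Icc (0:ℝ) 1, ∀ z ∈ Icc (0:ℝ) 1, x ≤ y → ot x z ≤ ot y z)
    (hmonoOp : ∀ x ∈ Icc (0:ℝ) 1, ∀ y ∈ Icc (0:ℝ) 1, ∀ z ∈ Icc (0:ℝ) 1, x ≤ y → op x z ≤ op y z)
    (hB : PropB ot) (hA' : PropA' op) :
    ∀ x₁ x₂ y₁ y₂ : ℝ, 0 ≤ x₁ → x₁ ≤ x₂ → x₂ ≤ 1 → 0 ≤ y₁ → y₁ ≤ y₂ → y₂ ≤ 1 →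
      op (ot x₁ y₂) (ot x₂ y₁) ≤ op (ot x₁ y₁) (ot x₂ y₂) :=
  rearrangement_condition_of_propB_propA'_general ot op hmapsOt hcommOt hcommOp hmonoOt hB hA'
end

section
/- If a binary operation ⊗ on [0,1] satisfies property A and a binary operation ⊕ on [0,1] satisfies property B', then for all 0 ≤ x₁ ≤ x₂ ≤ 1 and 0 ≤ y₁ ≤ y₂ ≤ 1, (x₁⊕y₁) ⊗ (x₂⊕y₂) ≤ (x₁⊕y₂) ⊗ (x₂⊕y₁). -/
/-!
Property B' is submodularity of `⊕`, so the four values `a = x₁⊕y₁`, `b = x₂⊕y₂`, `c = x₁⊕y₂`,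
`d = x₂⊕y₁` satisfy `a + b ≤ c + d`; monotonicity and commutativity of `⊕` place `a` below and
`b` above both `c` and `d`. This is exactly the configuration in which property A, after ordering
`c` and `d` by commutativity of `⊗`, gives `a ⊗ b ≤ c ⊗ d`.
-/

open Set

def PropB' (f : ℝ → ℝ → ℝ) : Prop :=
  ∀ x y z w : ℝ, 0 ≤ x → x ≤ y → y ≤ 1 → 0 ≤ z → z ≤ w → w ≤ 1 →
    f x w - f x z ≥ f y w - f y z

section

variable {f : ℝ → ℝ → ℝ}

theorem monotone_right_of_comm_of_monotone_left
    (hcomm : ∀ x ∈ Icc (0:ℝ) 1, ∀ y ∈ Icc (0:ℝ) 1, f x y = f y x)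
    (hmono : ∀ x ∈ Icc (0:ℝ) 1, ∀ y ∈ Icc (0:ℝ) 1, ∀ z ∈ Icc (0:ℝ) 1, x ≤ y → f x z ≤ f y z)
    ⦃x y z : ℝ⦄ (hx : x ∈ Icc (0:ℝ) 1) (hy : y ∈ Icc (0:ℝ) 1) (hz : z ∈ Icc (0:ℝ) 1)
    (hyz : y ≤ z) : f x y ≤ f x z := by
  rw [hcomm x hx y hy, hcomm x hx z hz]
  exact hmono y hy z hz x hx hyz

theorem PropB'.add_le_add_swap (hB' : PropB' f) {x₁ x₂ y₁ y₂ : ℝ}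
    (hx₁ : 0 ≤ x₁) (hx : x₁ ≤ x₂) (hx₂ : x₂ ≤ 1) (hy₁ : 0 ≤ y₁) (hy : y₁ ≤ y₂) (hy₂ : y₂ ≤ 1) :
    f x₂ y₂ + f x₁ y₁ ≤ f x₁ y₂ + f x₂ y₁ := by
  linarith [hB' x₁ x₂ y₁ y₂ hx₁ hx hx₂ hy₁ hy hy₂]

theorem PropA.apply_le_apply_of_add_le_add (hA : PropA f)
    (hcomm : ∀ x ∈ Icc (0:ℝ) 1, ∀ y ∈ Icc (0:ℝ) 1, f x y = f y x) {a b c d : ℝ}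
    (ha : 0 ≤ a) (hac : a ≤ c) (had : a ≤ d) (hcb : c ≤ b) (hdb : d ≤ b) (hb : b ≤ 1)
    (hsum : b + a ≤ c + d) : f a b ≤ f c d := by
  rcases le_total c d with hcd | hdc
  · exact hA a c d b ha hac hcd hdb hb hsum
  · calc f a b ≤ f d c := hA a d c b ha had hdc hcb hb (by linarith)
      _ = f c d := hcomm d ⟨ha.trans had, hdb.trans hb⟩ c ⟨ha.trans hac, hcb.trans hb⟩

end

theorem dual_rearrangement_condition_of_propA_propB'_general
    (ot op : ℝ → ℝ → ℝ)
    (hmapsOp : ∀ x ∈ Icc (0:ℝ) 1, ∀ y ∈ Icc (0:ℝ) 1, op x y ∈ Icc (0:ℝ) 1)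
    (hcommOt : ∀ x ∈ Icc (0:ℝ) 1, ∀ y ∈ Icc (0:ℝ) 1, ot x y = ot y x)
    (hcommOp : ∀ x ∈ Icc (0:ℝ) 1, ∀ y ∈ Icc (0:ℝ) 1, op x y = op y x)
    (hmonoOp : ∀ x ∈ Icc (0:ℝ) 1, ∀ y ∈ Icc (0:ℝ) 1, ∀ z ∈ Icc (0:ℝ) 1, x ≤ y → op x z ≤ op y z)
    (hA : PropA ot) (hB' : PropB' op) :
    ∀ x₁ x₂ y₁ y₂ : ℝ, 0 ≤ x₁ → x₁ ≤ x₂ → x₂ ≤ 1 → 0 ≤ y₁ → y₁ ≤ y₂ → y₂ ≤ 1 →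
      ot (op x₁ y₁) (op x₂ y₂) ≤ ot (op x₁ y₂) (op x₂ y₁) := by
  intro x₁ x₂ y₁ y₂ hx₁0 hx hx₂1 hy₁0 hy hy₂1
  have hx₁ : x₁ ∈ Icc (0:ℝ) 1 := ⟨hx₁0, hx.trans hx₂1⟩
  have hx₂ : x₂ ∈ Icc (0:ℝ) 1 := ⟨hx₁0.trans hx, hx₂1⟩
  have hy₁ : y₁ ∈ Icc (0:ℝ) 1 := ⟨hy₁0, hy.trans hy₂1⟩
  have hy₂ : y₂ ∈ Icc (0:ℝ) 1 := ⟨hy₁0.trans hy, hy₂1⟩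
  have hmonoOp_right := monotone_right_of_comm_of_monotone_left hcommOp hmonoOp
  exact hA.apply_le_apply_of_add_le_add hcommOt (hmapsOp x₁ hx₁ y₁ hy₁).1
    (hmonoOp_right hx₁ hy₁ hy₂ hy) (hmonoOp x₁ hx₁ x₂ hx₂ y₁ hy₁ hx)
    (hmonoOp x₁ hx₁ x₂ hx₂ y₂ hy₂ hx) (hmonoOp_right hx₂ hy₁ hy₂ hy) (hmapsOp x₂ hx₂ y₂ hy₂).2
    (hB'.add_le_add_swap hx₁0 hx hx₂1 hy₁0 hy hy₂1)

theorem dual_rearrangement_condition_of_propA_propB'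
    (ot op : ℝ → ℝ → ℝ)
    (hmapsOt : ∀ x ∈ Icc (0:ℝ) 1, ∀ y ∈ Icc (0:ℝ) 1, ot x y ∈ Icc (0:ℝ) 1)
    (hmapsOp : ∀ x ∈ Icc (0:ℝ) 1, ∀ y ∈ Icc (0:ℝ) 1, op x y ∈ Icc (0:ℝ) 1)
    (hcommOt : ∀ x ∈ Icc (0:ℝ) 1, ∀ y ∈ Icc (0:ℝ) 1, ot x y = ot y x)
    (hcommOp : ∀ x ∈ Icc (0:ℝ) 1, ∀ y ∈ Icc (0:ℝ) 1, op x y = op y x)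
    (hmonoOt : ∀ x ∈ Icc (0:ℝ) 1, ∀ y ∈ Icc (0:ℝ) 1, ∀ z ∈ Icc (0:ℝ) 1, x ≤ y → ot x z ≤ ot y z)
    (hmonoOp : ∀ x ∈ Icc (0:ℝ) 1, ∀ y ∈ Icc (0:ℝ) 1, ∀ z ∈ Icc (0:ℝ) 1, x ≤ y → op x z ≤ op y z)
    (hA : PropA ot) (hB' : PropB' op) :
    ∀ x₁ x₂ y₁ y₂ : ℝ, 0 ≤ x₁ → x₁ ≤ x₂ → x₂ ≤ 1 → 0 ≤ y₁ → y₁ ≤ y₂ → y₂ ≤ 1 →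
      ot (op x₁ y₁) (op x₂ y₂) ≤ ot (op x₁ y₂) (op x₂ y₁) :=
  dual_rearrangement_condition_of_propA_propB'_general ot op hmapsOp hcommOt hcommOp hmonoOp hA hB'
end

section
/- If ⊗ = min and ⊕ is any uninorm on [0,1], then for all 0 ≤ x₁ ≤ x₂ ≤ 1 and 0 ≤ y₁ ≤ y₂ ≤ 1: min(x₁,y₁) ⊕ min(x₂,y₂) ≥ min(x₁,y₂) ⊕ min(x₂,y₁), and min(x₁⊕y₁, x₂⊕y₂) ≤ min(x₁⊕y₂, x₂⊕y₁). -/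
open Set

section CrossMin

variable {α : Type*} [LinearOrder α] {x₁ x₂ y₁ y₂ : α}

theorem min_min_min_cross (hx : x₁ ≤ x₂) (hy : y₁ ≤ y₂) :
    min (min x₁ y₂) (min x₂ y₁) = min x₁ y₁ := by
  rw [min_min_min_comm, min_eq_left hx, min_eq_right hy]

theorem max_min_min_cross_le (hx : x₁ ≤ x₂) (hy : y₁ ≤ y₂) :
    max (min x₁ y₂) (min x₂ y₁) ≤ min x₂ y₂ :=
  max_le (min_le_min_right y₂ hx) (min_le_min_left x₂ hy)

end CrossMin

namespace IsUninorm

variable {op : ℝ → ℝ → ℝ} {a b c d : ℝ}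

theorem apply_le_apply (hop : IsUninorm op) (ha : a ∈ Icc (0:ℝ) 1) (hb : b ∈ Icc (0:ℝ) 1)
    (hc : c ∈ Icc (0:ℝ) 1) (hd : d ∈ Icc (0:ℝ) 1) (hac : a ≤ c) (hbd : b ≤ d) :
    op a b ≤ op c d := by
  obtain ⟨-, hcomm, -, hmono, -⟩ := hop
  calc op a b ≤ op c b := hmono a ha c hc b hb hac
    _ = op b c := hcomm c hc b hb
    _ ≤ op d c := hmono b hb d hd c hc hbd
    _ = op c d := hcomm d hd c hc

theorem apply_min_max (hop : IsUninorm op) (ha : a ∈ Icc (0:ℝ) 1) (hb : b ∈ Icc (0:ℝ) 1) :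
    op (min a b) (max a b) = op a b := by
  rcases le_total a b with hab | hba
  · rw [min_eq_left hab, max_eq_right hab]
  · rw [min_eq_right hba, max_eq_left hba, hop.2.1 b hb a ha]

theorem apply_le_apply_of_min_le_of_max_le (hop : IsUninorm op) (ha : a ∈ Icc (0:ℝ) 1)
    (hb : b ∈ Icc (0:ℝ) 1) (hc : c ∈ Icc (0:ℝ) 1) (hd : d ∈ Icc (0:ℝ) 1)
    (hc' : min a b ≤ c) (hd' : max a b ≤ d) : op a b ≤ op c d := by
  rw [← hop.apply_min_max ha hb]
  exact hop.apply_le_apply (min_rec' (· ∈ Icc (0:ℝ) 1) ha hb)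
    (max_rec' (· ∈ Icc (0:ℝ) 1) ha hb) hc hd hc' hd'

end IsUninorm

theorem min_with_uninorm_rearrangement (op : ℝ → ℝ → ℝ) (hop : IsUninorm op) :
    ∀ x₁ x₂ y₁ y₂ : ℝ, 0 ≤ x₁ → x₁ ≤ x₂ → x₂ ≤ 1 → 0 ≤ y₁ → y₁ ≤ y₂ → y₂ ≤ 1 →
      op (min x₁ y₂) (min x₂ y₁) ≤ op (min x₁ y₁) (min x₂ y₂) ∧
      min (op x₁ y₁) (op x₂ y₂) ≤ min (op x₁ y₂) (op x₂ y₁) := by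
  intro x₁ x₂ y₁ y₂ hx₁0 hx hx₂1 hy₁0 hy hy₂1
  have hx₁ : x₁ ∈ Icc (0:ℝ) 1 := ⟨hx₁0, hx.trans hx₂1⟩
  have hx₂ : x₂ ∈ Icc (0:ℝ) 1 := ⟨hx₁0.trans hx, hx₂1⟩
  have hy₁ : y₁ ∈ Icc (0:ℝ) 1 := ⟨hy₁0, hy.trans hy₂1⟩
  have hy₂ : y₂ ∈ Icc (0:ℝ) 1 := ⟨hy₁0.trans hy, hy₂1⟩
  have hmin {a b : ℝ} (ha : a ∈ Icc (0:ℝ) 1) (hb : b ∈ Icc (0:ℝ) 1) : min a b ∈ Icc (0:ℝ) 1 :=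
    min_rec' (· ∈ Icc (0:ℝ) 1) ha hb
  refine ⟨?_, ?_⟩
  · exact hop.apply_le_apply_of_min_le_of_max_le (hmin hx₁ hy₂) (hmin hx₂ hy₁)
      (hmin hx₁ hy₁) (hmin hx₂ hy₂) (min_min_min_cross hx hy).le (max_min_min_cross_le hx hy)
  · exact le_min (min_le_of_left_le (hop.apply_le_apply hx₁ hy₁ hx₁ hy₂ le_rfl hy))
      (min_le_of_left_le (hop.apply_le_apply hx₁ hy₁ hx₂ hy₁ hx le_rfl))
end

section
/- Let ⊗ be the drastic T-norm T_d (T_d(x,y) = min(x,y) if max(x,y) = 1, else 0) and ⊕ a disjunctive uninorm (0 ⊕ 1 = 1). Then for all 0 ≤ x₁ ≤ x₂ ≤ 1 and 0 ≤ y₁ ≤ y₂ ≤ 1: (x₁⊗y₁) ⊕ (x₂⊗y₂) ≥ (x₁⊗y₂) ⊕ (x₂⊗y₁). -/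
/-! With 0 ⊕ 1 = 1, monotonicity makes 1 absorbing for ⊕, which settles the case x₂ = y₂ = 1.
Otherwise, by the symmetry x ↔ y, we may assume y₂ < 1; then T_d(x, y) is y or 0 according as
x = 1 or not, and the claim reduces to commutativity of ⊕ (x₁ = 1), to monotonicity
0 ⊕ y₁ ≤ 0 ⊕ y₂ (x₁ < 1 = x₂), or to 0 ⊕ 0 ≤ 0 ⊕ 0. -/

open Set

noncomputable def Td (x y : ℝ) : ℝ := if max x y = 1 then min x y else 0

theorem Td_comm (x y : ℝ) : Td x y = Td y x := by
  rw [Td, Td, max_comm, min_comm]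

theorem Td_one_one : Td 1 1 = 1 := by
  simp [Td]

theorem Td_mem_Icc {x y : ℝ} (hx : x ∈ Icc (0:ℝ) 1) (hy : y ∈ Icc (0:ℝ) 1) :
    Td x y ∈ Icc (0:ℝ) 1 := by
  unfold Td
  split
  · exact ⟨le_min hx.1 hy.1, min_le_of_left_le hx.2⟩
  · exact ⟨le_rfl, zero_le_one⟩

theorem Td_of_lt_one_right {x y : ℝ} (hx : x ≤ 1) (hy : y < 1) :
    Td x y = if x = 1 then y else 0 := by
  by_cases h : x = 1
  · simp [Td, h, hy.le]
  · have : max x y ≠ 1 := (max_lt (lt_of_le_of_ne hx h) hy).ne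
    simp [Td, h, this]

namespace IsUninorm

variable {op : ℝ → ℝ → ℝ}

theorem mem_Icc (hop : IsUninorm op) {x y : ℝ} (hx : x ∈ Icc (0:ℝ) 1)
    (hy : y ∈ Icc (0:ℝ) 1) : op x y ∈ Icc (0:ℝ) 1 :=
  hop.1 x hx y hy

theorem comm (hop : IsUninorm op) {x y : ℝ} (hx : x ∈ Icc (0:ℝ) 1) (hy : y ∈ Icc (0:ℝ) 1) :
    op x y = op y x :=
  hop.2.1 x hx y hy

theorem mono_left (hop : IsUninorm op) {x y z : ℝ} (hx : x ∈ Icc (0:ℝ) 1)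
    (hy : y ∈ Icc (0:ℝ) 1) (hz : z ∈ Icc (0:ℝ) 1) (hxy : x ≤ y) : op x z ≤ op y z :=
  hop.2.2.2.1 x hx y hy z hz hxy

theorem mono_right (hop : IsUninorm op) {x y z : ℝ} (hx : x ∈ Icc (0:ℝ) 1)
    (hy : y ∈ Icc (0:ℝ) 1) (hz : z ∈ Icc (0:ℝ) 1) (hyz : y ≤ z) : op x y ≤ op x z := by
  rw [hop.comm hx hy, hop.comm hx hz]
  exact hop.mono_left hy hz hx hyz

theorem map_one_right_of_disjunctive (hop : IsUninorm op) (hdisj : op 0 1 = 1) {t : ℝ}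
    (ht : t ∈ Icc (0:ℝ) 1) : op t 1 = 1 := by
  have h1 : (1:ℝ) ∈ Icc (0:ℝ) 1 := right_mem_Icc.mpr zero_le_one
  refine le_antisymm (hop.mem_Icc ht h1).2 ?_
  calc (1:ℝ) = op 0 1 := hdisj.symm
    _ ≤ op t 1 := hop.mono_left (left_mem_Icc.mpr zero_le_one) ht h1 ht.1

theorem op_Td_cross_le_of_lt_one (hop : IsUninorm op) {x₁ x₂ y₁ y₂ : ℝ} (hx : x₁ ≤ x₂)
    (hx₂ : x₂ ≤ 1) (hy₁ : 0 ≤ y₁) (hy : y₁ ≤ y₂) (hy₂ : y₂ < 1) :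
    op (Td x₁ y₂) (Td x₂ y₁) ≤ op (Td x₁ y₁) (Td x₂ y₂) := by
  have hy₁' : y₁ ∈ Icc (0:ℝ) 1 := ⟨hy₁, by linarith⟩
  have hy₂' : y₂ ∈ Icc (0:ℝ) 1 := ⟨by linarith, hy₂.le⟩
  rw [Td_of_lt_one_right (hx.trans hx₂) hy₂, Td_of_lt_one_right hx₂ (hy.trans_lt hy₂),
    Td_of_lt_one_right (hx.trans hx₂) (hy.trans_lt hy₂), Td_of_lt_one_right hx₂ hy₂]
  by_cases h₁ : x₁ = 1
  · have h₂ : x₂ = 1 := le_antisymm hx₂ (h₁ ▸ hx)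
    simp only [h₁, h₂, if_true]
    exact (hop.comm hy₂' hy₁').le
  · by_cases h₂ : x₂ = 1
    · simp only [h₁, h₂, if_true, if_false]
      exact hop.mono_right (left_mem_Icc.mpr zero_le_one) hy₁' hy₂' hy
    · simp only [h₁, h₂, if_false, le_rfl]

end IsUninorm

theorem drastic_tnorm_with_disjunctive_uninorm (op : ℝ → ℝ → ℝ)
    (hop : IsUninorm op) (hdisj : op 0 1 = 1) :
    ∀ x₁ x₂ y₁ y₂ : ℝ, 0 ≤ x₁ → x₁ ≤ x₂ → x₂ ≤ 1 → 0 ≤ y₁ → y₁ ≤ y₂ → y₂ ≤ 1 →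
      op (Td x₁ y₂) (Td x₂ y₁) ≤ op (Td x₁ y₁) (Td x₂ y₂) := by
  intro x₁ x₂ y₁ y₂ hx₁ hx hx₂ hy₁ hy hy₂
  have hx₁' : x₁ ∈ Icc (0:ℝ) 1 := ⟨hx₁, hx.trans hx₂⟩
  have hx₂' : x₂ ∈ Icc (0:ℝ) 1 := ⟨hx₁.trans hx, hx₂⟩
  have hy₁' : y₁ ∈ Icc (0:ℝ) 1 := ⟨hy₁, hy.trans hy₂⟩
  have hy₂' : y₂ ∈ Icc (0:ℝ) 1 := ⟨hy₁.trans hy, hy₂⟩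
  by_cases htop : x₂ = 1 ∧ y₂ = 1
  · obtain ⟨rfl, rfl⟩ := htop
    rw [Td_one_one, hop.map_one_right_of_disjunctive hdisj (Td_mem_Icc hx₁' hy₁')]
    exact (hop.mem_Icc (Td_mem_Icc hx₁' hy₂') (Td_mem_Icc hx₂' hy₁')).2
  rcases not_and_or.mp htop with hx₂1 | hy₂1
  · have key := hop.op_Td_cross_le_of_lt_one hy hy₂ hx₁ hx (lt_of_le_of_ne hx₂ hx₂1)
    rw [Td_comm y₁ x₂, Td_comm y₂ x₁, Td_comm y₁ x₁, Td_comm y₂ x₂,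
      hop.comm (Td_mem_Icc hx₂' hy₁') (Td_mem_Icc hx₁' hy₂')] at key
    exact key
  · exact hop.op_Td_cross_le_of_lt_one hx hx₂ hy₁ hy (lt_of_le_of_ne hy₂ hy₂1)
end

section
/- Let ⊕ be the drastic T-conorm T_d' and ⊗ a T-norm with no zero divisors (x⊗y = 0 implies x = 0 or y = 0). Then for all 0 ≤ x₁ ≤ x₂ ≤ 1 and 0 ≤ y₁ ≤ y₂ ≤ 1: (x₁⊗y₁) ⊕ (x₂⊗y₂) ≥ (x₁⊗y₂) ⊕ (x₂⊗y₁), hence (⊗, T_d') satisfies the rearrangement inequality. -/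
open Set

noncomputable def Td' (x y : ℝ) : ℝ := if min x y = 0 then max x y else 1

/-!
Iterated, the drastic t-conorm `Td'` is `1` as soon as two of its arguments are positive and
otherwise equals its largest argument. So one such sum of products lies below another when two
positive products in the first force two in the second and every product of the first is
dominated by a product of the second. Without zero divisors `x ⊗ y > 0` iff `x > 0` and `y > 0`,
and for monotone `x`, `y` both conditions become counting statements: the positive indices of `x`
and of `y` are nested upper sets, which settles the comparison with the identity pairing, and by
inclusion–exclusion every pairing `σ` matches at least as many large entries as the reversal.
-/

lemma Td'_comm (a b : ℝ) : Td' a b = Td' b a := by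
  simp only [Td', min_comm, max_comm]

lemma Td'_zero_right {a : ℝ} (ha : 0 ≤ a) : Td' a 0 = a := by
  simp [Td', ha]

lemma Td'_zero_left {a : ℝ} (ha : 0 ≤ a) : Td' 0 a = a := by
  rw [Td'_comm, Td'_zero_right ha]

lemma Td'_eq_one {a b : ℝ} (ha : 0 < a) (hb : 0 < b) : Td' a b = 1 :=
  if_neg (lt_min ha hb).ne'

lemma Td'_le_one {a b : ℝ} (ha : a ≤ 1) (hb : b ≤ 1) : Td' a b ≤ 1 := by
  unfold Td'
  split_ifs
  · exact max_le ha hb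
  · exact le_rfl

lemma le_Td'_left {a : ℝ} (b : ℝ) (ha : a ≤ 1) : a ≤ Td' a b := by
  unfold Td'
  split_ifs
  · exact le_max_left a b
  · exact ha

lemma le_Td'_right (a : ℝ) {b : ℝ} (hb : b ≤ 1) : b ≤ Td' a b :=
  Td'_comm b a ▸ le_Td'_left a hb

section IterOp

variable {n : ℕ} {v : Fin (n + 1) → ℝ}

lemma iterOp_Td'_le_one (hv : ∀ i, v i ≤ 1) : iterOp Td' n v ≤ 1 := by
  induction n with
  | zero => exact hv 0
  | succ n ih => exact Td'_le_one (ih fun i => hv _) (hv _)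

lemma le_iterOp_Td' (hv : ∀ i, v i ≤ 1) (i : Fin (n + 1)) : v i ≤ iterOp Td' n v := by
  induction n with
  | zero => exact Fin.fin_one_eq_zero i ▸ le_rfl
  | succ n ih =>
    induction i using Fin.lastCases with
    | last => exact le_Td'_right _ (hv _)
    | cast j =>
      exact (ih (fun k => hv _) j).trans (le_Td'_left _ (iterOp_Td'_le_one fun k => hv _))

lemma iterOp_Td'_eq_one (hv : ∀ i, v i ≤ 1) {i j : Fin (n + 1)} (hij : i ≠ j)
    (hi : 0 < v i) (hj : 0 < v j) : iterOp Td' n v = 1 := by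
  induction n with
  | zero => exact absurd ((Fin.fin_one_eq_zero i).trans (Fin.fin_one_eq_zero j).symm) hij
  | succ n ih =>
    have hinit := le_iterOp_Td' (v := fun k => v (Fin.castSucc k)) (fun k => hv _)
    show Td' _ _ = 1
    induction i using Fin.lastCases with
    | last =>
      induction j using Fin.lastCases with
      | last => exact absurd rfl hij
      | cast j => exact Td'_eq_one (hj.trans_le (hinit j)) hi
    | cast i =>
      induction j using Fin.lastCases with
      | last => exact Td'_eq_one (hi.trans_le (hinit i)) hj
      | cast j =>
        have hone := ih (fun k => hv _) (fun h => hij (congrArg _ h)) hi hj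
        exact le_antisymm (Td'_le_one hone.le (hv _)) (hone.symm.trans_le (le_Td'_left _ hone.le))

lemma exists_iterOp_Td'_eq (hv : ∀ i, 0 ≤ v i) (hv₁ : ∀ i j, 0 < v i → 0 < v j → i = j) :
    ∃ i, iterOp Td' n v = v i := by
  induction n with
  | zero => exact ⟨0, rfl⟩
  | succ n ih =>
    obtain ⟨i, hi⟩ := ih (fun k => hv _)
      (fun k l hk hl => Fin.castSucc_injective _ (hv₁ _ _ hk hl))
    show ∃ i, Td' _ _ = _
    rcases (hv (Fin.last _)).eq_or_lt with hlast | hlast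
    · exact ⟨i.castSucc, by rw [hi, ← hlast, Td'_zero_right (hv _)]⟩
    · have hzero : v i.castSucc = 0 :=
        ((hv _).eq_or_lt.resolve_right fun h => Fin.castSucc_ne_last i (hv₁ _ _ h hlast)).symm
      exact ⟨Fin.last _, by rw [hi, hzero, Td'_zero_left hlast.le]⟩

end IterOp

lemma iterOp_Td'_le_iterOp_Td' {n : ℕ} {a b : Fin (n + 1) → ℝ}
    (ha : ∀ i, a i ∈ Icc (0:ℝ) 1) (hb : ∀ i, b i ≤ 1)
    (htwo : (∃ i j, i ≠ j ∧ 0 < a i ∧ 0 < a j) → ∃ i j, i ≠ j ∧ 0 < b i ∧ 0 < b j)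
    (hdom : ∀ i, ∃ k, a i ≤ b k) :
    iterOp Td' n a ≤ iterOp Td' n b := by
  by_cases h : ∃ i j, i ≠ j ∧ 0 < a i ∧ 0 < a j
  · obtain ⟨i, j, hij, hi, hj⟩ := htwo h
    rw [iterOp_Td'_eq_one hb hij hi hj]
    exact iterOp_Td'_le_one fun i => (ha i).2
  · obtain ⟨i, hi⟩ := exists_iterOp_Td'_eq (fun i => (ha i).1)
      (fun i j hi hj => by_contra fun hij => h ⟨i, j, hij, hi, hj⟩)
    obtain ⟨k, hk⟩ := hdom i
    exact hi ▸ hk.trans (le_iterOp_Td' hb k)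

namespace IsTnorm

variable {ot : ℝ → ℝ → ℝ} {a b : ℝ}

lemma mono (hot : IsTnorm ot) {a₁ a₂ b₁ b₂ : ℝ} (ha₁ : a₁ ∈ Icc (0:ℝ) 1)
    (ha₂ : a₂ ∈ Icc (0:ℝ) 1) (hb₁ : b₁ ∈ Icc (0:ℝ) 1) (hb₂ : b₂ ∈ Icc (0:ℝ) 1)
    (ha : a₁ ≤ a₂) (hb : b₁ ≤ b₂) : ot a₁ b₁ ≤ ot a₂ b₂ :=
  calc ot a₁ b₁ ≤ ot a₂ b₁ := hot.2.2.2.1 a₁ ha₁ a₂ ha₂ b₁ hb₁ ha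
    _ = ot b₁ a₂ := hot.2.1 a₂ ha₂ b₁ hb₁
    _ ≤ ot b₂ a₂ := hot.2.2.2.1 b₁ hb₁ b₂ hb₂ a₂ ha₂ hb
    _ = ot a₂ b₂ := hot.2.1 b₂ hb₂ a₂ ha₂

lemma zero_right (hot : IsTnorm ot) (ha : a ∈ Icc (0:ℝ) 1) : ot a 0 = 0 := by
  have h0 : (0:ℝ) ∈ Icc (0:ℝ) 1 := left_mem_Icc.2 zero_le_one
  have h1 : (1:ℝ) ∈ Icc (0:ℝ) 1 := right_mem_Icc.2 zero_le_one
  refine le_antisymm ?_ (hot.1 a ha 0 h0).1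
  calc ot a 0 ≤ ot 1 0 := hot.mono ha h1 h0 h0 ha.2 le_rfl
    _ = ot 0 1 := hot.2.1 1 h1 0 h0
    _ = 0 := hot.2.2.2.2 0 h0

lemma zero_left (hot : IsTnorm ot) (hb : b ∈ Icc (0:ℝ) 1) : ot 0 b = 0 :=
  (hot.2.1 0 (left_mem_Icc.2 zero_le_one) b hb).trans (hot.zero_right hb)

lemma pos_iff (hot : IsTnorm ot)
    (hnzd : ∀ x ∈ Icc (0:ℝ) 1, ∀ y ∈ Icc (0:ℝ) 1, ot x y = 0 → x = 0 ∨ y = 0)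
    (ha : a ∈ Icc (0:ℝ) 1) (hb : b ∈ Icc (0:ℝ) 1) :
    0 < ot a b ↔ 0 < a ∧ 0 < b := by
  refine ⟨fun h => ⟨ha.1.lt_of_ne ?_, hb.1.lt_of_ne ?_⟩, fun ⟨ha', hb'⟩ => ?_⟩
  · rintro rfl
    exact h.ne' (hot.zero_left hb)
  · rintro rfl
    exact h.ne' (hot.zero_right ha)
  · exact (hot.1 a ha b hb).1.lt_of_ne fun h => (hnzd a ha b hb h.symm).elim ha'.ne' hb'.ne'

end IsTnorm

open Finset in
lemma le_card_filter_le_perm_and_le {n : ℕ} (σ : Equiv.Perm (Fin (n + 1))) (c d : Fin (n + 1)) :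
    n + 1 - (c + d : ℕ) ≤ #{k | c ≤ σ k ∧ d ≤ k} := by
  set A : Finset (Fin (n + 1)) := {k | c ≤ σ k}
  set B : Finset (Fin (n + 1)) := {k | d ≤ k}
  have hA : #A = n + 1 - c :=
    (card_equiv σ (t := {k | c ≤ k}) (by simp [A])).trans (by simp [filter_le_eq_Ici])
  have hB : #B = n + 1 - d := by simp [B, filter_le_eq_Ici]
  have hunion : #(A ∪ B) ≤ n + 1 := (card_le_univ _).trans_eq (Fintype.card_fin _)
  have hAB : #(A ∪ B) + #(A ∩ B) = #A + #B := card_union_add_card_inter A B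
  rw [filter_and]
  change _ ≤ #(A ∩ B)
  omega

section Rearrangement

variable {ot : ℝ → ℝ → ℝ} {n : ℕ} {x y : Fin (n + 1) → ℝ}

lemma iterOp_Td'_rev_le (hot : IsTnorm ot)
    (hnzd : ∀ x ∈ Icc (0:ℝ) 1, ∀ y ∈ Icc (0:ℝ) 1, ot x y = 0 → x = 0 ∨ y = 0)
    (hxm : Monotone x) (hym : Monotone y)
    (hx : ∀ i, x i ∈ Icc (0:ℝ) 1) (hy : ∀ i, y i ∈ Icc (0:ℝ) 1) (σ : Equiv.Perm (Fin (n + 1))) :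
    iterOp Td' n (fun i => ot (x i.rev) (y i)) ≤ iterOp Td' n (fun i => ot (x (σ i)) (y i)) := by
  have hpos : ∀ i j, 0 < ot (x i) (y j) ↔ 0 < x i ∧ 0 < y j :=
    fun i j => hot.pos_iff hnzd (hx i) (hy j)
  refine iterOp_Td'_le_iterOp_Td' (fun i => hot.1 _ (hx _) _ (hy _))
    (fun i => (hot.1 _ (hx _) _ (hy _)).2) ?_ fun i => ?_
  · rintro ⟨i, j, hij, hi, hj⟩
    wlog hlt : i < j generalizing i j
    · exact this j i hij.symm hj hi (hij.symm.lt_of_le (not_lt.1 hlt))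
    have hxj := ((hpos _ _).1 hj).1
    have hyi := ((hpos _ _).1 hi).2
    have hcard := le_card_filter_le_perm_and_le σ j.rev i
    rw [Fin.val_rev] at hcard
    obtain ⟨k, hk, l, hl, hkl⟩ := Finset.one_lt_card.1 ((by omega : 1 < _).trans_le hcard)
    simp only [Finset.mem_filter, Finset.mem_univ, true_and] at hk hl
    exact ⟨k, l, hkl, (hpos _ _).2 ⟨hxj.trans_le (hxm hk.1), hyi.trans_le (hym hk.2)⟩,
      (hpos _ _).2 ⟨hxj.trans_le (hxm hl.1), hyi.trans_le (hym hl.2)⟩⟩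
  · have hcard := le_card_filter_le_perm_and_le σ i.rev i
    rw [Fin.val_rev] at hcard
    obtain ⟨k, hk⟩ := Finset.card_pos.1 ((by omega : 0 < _).trans_le hcard)
    simp only [Finset.mem_filter, Finset.mem_univ, true_and] at hk
    exact ⟨k, hot.mono (hx _) (hx _) (hy _) (hy _) (hxm hk.1) (hym hk.2)⟩

lemma iterOp_Td'_le_id (hot : IsTnorm ot)
    (hnzd : ∀ x ∈ Icc (0:ℝ) 1, ∀ y ∈ Icc (0:ℝ) 1, ot x y = 0 → x = 0 ∨ y = 0)
    (hxm : Monotone x) (hym : Monotone y)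
    (hx : ∀ i, x i ∈ Icc (0:ℝ) 1) (hy : ∀ i, y i ∈ Icc (0:ℝ) 1) (σ : Equiv.Perm (Fin (n + 1))) :
    iterOp Td' n (fun i => ot (x (σ i)) (y i)) ≤ iterOp Td' n (fun i => ot (x i) (y i)) := by
  have hpos : ∀ i j, 0 < ot (x i) (y j) ↔ 0 < x i ∧ 0 < y j :=
    fun i j => hot.pos_iff hnzd (hx i) (hy j)
  refine iterOp_Td'_le_iterOp_Td' (fun i => hot.1 _ (hx _) _ (hy _))
    (fun i => (hot.1 _ (hx _) _ (hy _)).2) ?_ fun i => ?_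
  · rintro ⟨i, j, hij, hi, hj⟩
    rw [hpos] at hi hj
    rcases ((isUpperSet_Ioi 0).preimage hxm).total ((isUpperSet_Ioi 0).preimage hym) with h | h
    · exact ⟨σ i, σ j, σ.injective.ne hij, (hpos _ _).2 ⟨hi.1, h hi.1⟩,
        (hpos _ _).2 ⟨hj.1, h hj.1⟩⟩
    · exact ⟨i, j, hij, (hpos _ _).2 ⟨h hi.2, hi.2⟩, (hpos _ _).2 ⟨h hj.2, hj.2⟩⟩
  · exact ⟨Fin.last n, hot.mono (hx _) (hx _) (hy _) (hy _)
      (hxm (Fin.le_last _)) (hym (Fin.le_last _))⟩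

end Rearrangement

theorem tnorm_no_zero_divisors_with_drastic_tconorm (ot : ℝ → ℝ → ℝ)
    (hot : IsTnorm ot)
    (hnzd : ∀ x ∈ Icc (0:ℝ) 1, ∀ y ∈ Icc (0:ℝ) 1, ot x y = 0 → x = 0 ∨ y = 0) :
    (∀ x₁ x₂ y₁ y₂ : ℝ, 0 ≤ x₁ → x₁ ≤ x₂ → x₂ ≤ 1 → 0 ≤ y₁ → y₁ ≤ y₂ → y₂ ≤ 1 →
      Td' (ot x₁ y₂) (ot x₂ y₁) ≤ Td' (ot x₁ y₁) (ot x₂ y₂)) ∧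
    RearrangementIneq ot Td' := by
  have hrearr : RearrangementIneq ot Td' := fun _ _ _ hxm hym hx hy σ =>
    ⟨iterOp_Td'_rev_le hot hnzd hxm hym hx hy σ, iterOp_Td'_le_id hot hnzd hxm hym hx hy σ⟩
  refine ⟨fun x₁ x₂ y₁ y₂ hx₁ hx₁₂ hx₂ hy₁ hy₁₂ hy₂ => ?_, hrearr⟩
  have hx : ∀ i, ![x₁, x₂] i ∈ Icc (0:ℝ) 1 := by
    simp [Fin.forall_fin_two, hx₁, hx₂, hx₁.trans hx₁₂, hx₁₂.trans hx₂]
  have hy : ∀ i, ![y₁, y₂] i ∈ Icc (0:ℝ) 1 := by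
    simp [Fin.forall_fin_two, hy₁, hy₂, hy₁.trans hy₁₂, hy₁₂.trans hy₂]
  have h := (hrearr 1 _ _ (monotone_vecEmpty.vecCons hx₁₂) (monotone_vecEmpty.vecCons hy₁₂)
    hx hy 1).1
  exact (Td'_comm _ _).trans_le h
end

section
/- Let ⊗ be the nilpotent minimum T_n (T_n(x,y) = min(x,y) if x+y > 1, else 0) and ⊕ the Łukasiewicz T-norm T_L (T_L(x,y) = max(x+y−1, 0)). Then for all 0 ≤ x₁ ≤ x₂ ≤ 1 and 0 ≤ y₁ ≤ y₂ ≤ 1: (x₁⊗y₁) ⊕ (x₂⊗y₂) ≥ (x₁⊗y₂) ⊕ (x₂⊗y₁) and (x₁⊕y₁) ⊗ (x₂⊕y₂) ≤ (x₁⊕y₂) ⊗ (x₂⊕y₁). -/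
noncomputable def Tn (x y : ℝ) : ℝ := if 1 < x + y then min x y else 0

noncomputable def TL (x y : ℝ) : ℝ := max (x + y - 1) 0

/-! If `x₁ + y₁ ≤ 1`, the left-hand side of either inequality vanishes. Otherwise all four
sums `xᵢ + yⱼ` exceed `1`, so `Tn` is `min` and `TL` is `x + y - 1` on the relevant arguments:
the first inequality becomes supermodularity of `min`, and in the second the arguments on the
right have the same sum as those on the left but a larger minimum. -/

lemma min_add_min_le_min_add_min {a b c d : ℝ} (hab : a ≤ b) (hcd : c ≤ d) :
    min a d + min b c ≤ min a c + min b d := by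
  simp only [min_def]
  split_ifs <;> linarith

lemma Tn_eq_min {x y : ℝ} (h : 1 < x + y) : Tn x y = min x y := if_pos h

lemma Tn_eq_zero {x y : ℝ} (h : x + y ≤ 1) : Tn x y = 0 := if_neg h.not_gt

lemma Tn_nonneg {x y : ℝ} (hx : 0 ≤ x) (hy : 0 ≤ y) : 0 ≤ Tn x y := by
  unfold Tn
  split_ifs
  exacts [le_min hx hy, le_rfl]

lemma Tn_le_left {x : ℝ} (y : ℝ) (hx : 0 ≤ x) : Tn x y ≤ x := by
  unfold Tn
  split_ifs
  exacts [min_le_left x y, hx]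

lemma Tn_le_right (x : ℝ) {y : ℝ} (hy : 0 ≤ y) : Tn x y ≤ y := by
  unfold Tn
  split_ifs
  exacts [min_le_right x y, hy]

lemma Tn_le_Tn_of_add_eq {a b c d : ℝ} (hac : a ≤ c) (had : a ≤ d) (hc : 0 ≤ c) (hd : 0 ≤ d)
    (hsum : a + b = c + d) : Tn a b ≤ Tn c d := by
  by_cases h : 1 < a + b
  · rw [Tn_eq_min h, Tn_eq_min (hsum ▸ h)]
    exact (min_le_left a b).trans (le_min hac had)
  · rw [Tn_eq_zero (not_lt.mp h)]
    exact Tn_nonneg hc hd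

lemma TL_nonneg (x y : ℝ) : 0 ≤ TL x y := le_max_right _ _

lemma TL_eq_zero {x y : ℝ} (h : x + y ≤ 1) : TL x y = 0 := max_eq_right (by linarith)

lemma TL_eq_add_sub_one {x y : ℝ} (h : 1 ≤ x + y) : TL x y = x + y - 1 :=
  max_eq_left (by linarith)

lemma TL_le_one {x y : ℝ} (hx : x ≤ 1) (hy : y ≤ 1) : TL x y ≤ 1 :=
  max_le (by linarith) zero_le_one

lemma TL_le_TL_of_add_le {a b c d : ℝ} (h : a + b ≤ c + d) : TL a b ≤ TL c d :=
  max_le_max (by linarith) le_rfl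

section

variable {x₁ x₂ y₁ y₂ : ℝ}

lemma TL_Tn_le_TL_Tn (hx₁ : 0 ≤ x₁) (hx : x₁ ≤ x₂) (hy₁ : 0 ≤ y₁) (hy : y₁ ≤ y₂) :
    TL (Tn x₁ y₂) (Tn x₂ y₁) ≤ TL (Tn x₁ y₁) (Tn x₂ y₂) := by
  by_cases h : 1 < x₁ + y₁
  · rw [Tn_eq_min h, Tn_eq_min (by linarith : 1 < x₁ + y₂), Tn_eq_min (by linarith : 1 < x₂ + y₁),
      Tn_eq_min (by linarith : 1 < x₂ + y₂)]
    exact TL_le_TL_of_add_le (min_add_min_le_min_add_min hx hy)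
  · have hsum : Tn x₁ y₂ + Tn x₂ y₁ ≤ 1 := by
      linarith [Tn_le_left y₂ hx₁, Tn_le_right x₂ hy₁]
    rw [TL_eq_zero hsum]
    exact TL_nonneg _ _

lemma Tn_TL_le_Tn_TL (hx : x₁ ≤ x₂) (hx₂ : x₂ ≤ 1) (hy : y₁ ≤ y₂) (hy₂ : y₂ ≤ 1) :
    Tn (TL x₁ y₁) (TL x₂ y₂) ≤ Tn (TL x₁ y₂) (TL x₂ y₁) := by
  by_cases h : 1 < x₁ + y₁
  · rw [TL_eq_add_sub_one h.le, TL_eq_add_sub_one (by linarith : 1 ≤ x₂ + y₂),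
      TL_eq_add_sub_one (by linarith : 1 ≤ x₁ + y₂), TL_eq_add_sub_one (by linarith : 1 ≤ x₂ + y₁)]
    exact Tn_le_Tn_of_add_eq (by linarith) (by linarith) (by linarith) (by linarith) (by ring)
  · rw [TL_eq_zero (not_lt.mp h), Tn_eq_zero (by linarith [TL_le_one hx₂ hy₂])]
    exact Tn_nonneg (TL_nonneg _ _) (TL_nonneg _ _)

end

theorem nilpotent_min_with_lukasiewicz :
    ∀ x₁ x₂ y₁ y₂ : ℝ, 0 ≤ x₁ → x₁ ≤ x₂ → x₂ ≤ 1 → 0 ≤ y₁ → y₁ ≤ y₂ → y₂ ≤ 1 →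
      TL (Tn x₁ y₂) (Tn x₂ y₁) ≤ TL (Tn x₁ y₁) (Tn x₂ y₂) ∧
      Tn (TL x₁ y₁) (TL x₂ y₂) ≤ Tn (TL x₁ y₂) (TL x₂ y₁) :=
  fun _ _ _ _ hx₁ hx hx₂ hy₁ hy hy₂ =>
    ⟨TL_Tn_le_TL_Tn hx₁ hx hy₁ hy, Tn_TL_le_Tn_TL hx hx₂ hy hy₂⟩
end

section
/- The nilpotent minimum T_n satisfies property A: for all 0 ≤ x ≤ y ≤ z ≤ w ≤ 1 with w + x ≤ y + z, T_n(x,w) ≤ T_n(y,z), where T_n(a,b) = min(a,b) if a+b > 1 and 0 otherwise. -/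
lemma Tn_nonneg_s15 {a b : ℝ} (ha : 0 ≤ a) (hb : 0 ≤ b) : 0 ≤ Tn a b := by
  unfold Tn
  split_ifs
  exacts [le_min ha hb, le_rfl]

lemma Tn_eq_left {a b : ℝ} (hab : a ≤ b) (h : 1 < a + b) : Tn a b = a := by
  rw [Tn, if_pos h, min_eq_left hab]

theorem nilpotent_min_propA :
    ∀ x y z w : ℝ, 0 ≤ x → x ≤ y → y ≤ z → z ≤ w → w ≤ 1 →
      w + x ≤ y + z → Tn x w ≤ Tn y z := by
  intro x y z w hx hxy hyz hzw _ hsum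
  by_cases hpos : 1 < x + w
  · have hpos' : 1 < y + z := by linarith
    rw [Tn_eq_left (by linarith) hpos, Tn_eq_left hyz hpos']
    exact hxy
  · rw [Tn, if_neg hpos]
    exact Tn_nonneg_s15 (hx.trans hxy) (hx.trans (hxy.trans hyz))
end

section
/- Let f₁, f₂ be T-norms satisfying property A, and let f be the ordinal sum of (f₁, (0,a)) and (f₂, (a,1)) for some a ∈ (0,1): f(x,y) = a·f₁(x/a, y/a) if x,y ∈ [0,a], f(x,y) = a + (1−a)·f₂((x−a)/(1−a), (y−a)/(1−a)) if x,y ∈ [a,1], and f(x,y) = min(x,y) otherwise. Then f satisfies property A. -/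
/-! Each block of the ordinal sum is an affine copy of `f₁` or `f₂`, and property A survives
increasing affine rescaling, so it holds whenever `x, y, z, w` lie in one block. Otherwise
`x < a < w` and `f x w = x`. Property A and the identity law of `f₁` give the Łukasiewicz bound
`y + z - a ≤ f y z` on the lower block, which settles `z ≤ a` since `x ≤ y + z - w < y + z - a`;
for `z > a` the value `f y z` is either `y ≥ x` or at least `a > x`. -/

open Set

def PropAOn (f : ℝ → ℝ → ℝ) (s t : ℝ) : Prop :=
  ∀ x y z w : ℝ, s ≤ x → x ≤ y → y ≤ z → z ≤ w → w ≤ t → w + x ≤ y + z → f x w ≤ f y z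

noncomputable def ordinalSummand (f : ℝ → ℝ → ℝ) (s t : ℝ) : ℝ → ℝ → ℝ :=
  fun x y => s + (t - s) * f ((x - s) / (t - s)) ((y - s) / (t - s))

namespace IsTnorm

variable {f : ℝ → ℝ → ℝ}

theorem map_one_right (hf : IsTnorm f) {x : ℝ} (hx : x ∈ Icc (0 : ℝ) 1) : f x 1 = x :=
  hf.2.2.2.2 x hx

theorem nonneg (hf : IsTnorm f) {x y : ℝ} (hx : x ∈ Icc (0 : ℝ) 1) (hy : y ∈ Icc (0 : ℝ) 1) :
    0 ≤ f x y :=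
  (hf.1 x hx y hy).1

theorem map_zero_left (hf : IsTnorm f) {x : ℝ} (hx : x ∈ Icc (0 : ℝ) 1) : f 0 x = 0 := by
  have h0 : (0 : ℝ) ∈ Icc (0 : ℝ) 1 := ⟨le_rfl, zero_le_one⟩
  have h1 : (1 : ℝ) ∈ Icc (0 : ℝ) 1 := ⟨zero_le_one, le_rfl⟩
  refine le_antisymm ?_ (hf.nonneg h0 hx)
  calc f 0 x = f x 0 := hf.2.1 0 h0 x hx
    _ ≤ f 1 0 := hf.2.2.2.1 x hx 1 h1 0 h0 hx.2
    _ = f 0 1 := hf.2.1 1 h1 0 h0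
    _ = 0 := hf.map_one_right h0

end IsTnorm

theorem sub_div_sub_mem_Icc {s t x : ℝ} (hst : s < t) (hx : x ∈ Icc s t) :
    (x - s) / (t - s) ∈ Icc (0 : ℝ) 1 :=
  ⟨div_nonneg (by linarith [hx.1]) (by linarith),
    (div_le_one (by linarith)).2 (by linarith [hx.2])⟩

section ordinalSummand

variable {f : ℝ → ℝ → ℝ} {s t : ℝ}

theorem PropA.propAOn_ordinalSummand (hA : PropA f) (hst : s < t) :
    PropAOn (ordinalSummand f s t) s t := by
  intro x y z w hx hxy hyz hzw hwt hsum
  have hd : 0 < t - s := by linarith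
  refine (add_le_add_iff_left s).2 (mul_le_mul_of_nonneg_left ?_ hd.le)
  refine hA _ _ _ _ (div_nonneg (by linarith) hd.le) (by gcongr) (by gcongr) (by gcongr)
    ((div_le_one hd).2 (by linarith)) ?_
  rw [← add_div, ← add_div]
  exact div_le_div_of_nonneg_right (by linarith) hd.le

theorem ordinalSummand_right_end (hid : ∀ u ∈ Icc (0 : ℝ) 1, f u 1 = u) (hst : s < t)
    {x : ℝ} (hx : x ∈ Icc s t) : ordinalSummand f s t x t = x := by
  have hd : t - s ≠ 0 := by linarith
  simp only [ordinalSummand, div_self hd, hid _ (sub_div_sub_mem_Icc hst hx),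
    mul_div_cancel₀ _ hd, add_sub_cancel]

theorem le_ordinalSummand (hf : IsTnorm f) (hst : s < t) {x y : ℝ} (hx : x ∈ Icc s t)
    (hy : y ∈ Icc s t) : s ≤ ordinalSummand f s t x y :=
  le_add_of_nonneg_right <| mul_nonneg (by linarith)
    (hf.nonneg (sub_div_sub_mem_Icc hst hx) (sub_div_sub_mem_Icc hst hy))

end ordinalSummand

namespace PropAOn

variable {f g : ℝ → ℝ → ℝ} {s t : ℝ}

theorem congr (hg : PropAOn g s t) (hfg : ∀ x ∈ Icc s t, ∀ y ∈ Icc s t, f x y = g x y) :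
    PropAOn f s t := by
  intro x y z w hx hxy hyz hzw hwt hsum
  rw [hfg x ⟨hx, by linarith⟩ w ⟨by linarith, hwt⟩, hfg y ⟨by linarith, by linarith⟩ z
    ⟨by linarith, by linarith⟩]
  exact hg x y z w hx hxy hyz hzw hwt hsum

/-- Property A at `(y + z - t, y, z, t)`. -/
theorem add_sub_le (hf : PropAOn f s t) (hid : ∀ x ∈ Icc s t, f x t = x) {y z : ℝ}
    (hs : s ≤ y + z - t) (hyz : y ≤ z) (hzt : z ≤ t) : y + z - t ≤ f y z := by
  have h := hf (y + z - t) y z t hs (by linarith) hyz hzt le_rfl (by linarith)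
  rwa [hid _ ⟨hs, by linarith⟩] at h

end PropAOn

def IsOrdinalSum (f f₁ f₂ : ℝ → ℝ → ℝ) (a : ℝ) : Prop :=
  ∀ x ∈ Icc (0:ℝ) 1, ∀ y ∈ Icc (0:ℝ) 1,
    f x y = if x ∈ Icc (0:ℝ) a ∧ y ∈ Icc (0:ℝ) a then a * f₁ (x / a) (y / a)
      else if x ∈ Icc a 1 ∧ y ∈ Icc a 1 then
        a + (1 - a) * f₂ ((x - a) / (1 - a)) ((y - a) / (1 - a))
      else min x y

namespace IsOrdinalSum

variable {f f₁ f₂ : ℝ → ℝ → ℝ} {a : ℝ}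

theorem eq_ordinalSummand_low (hf : IsOrdinalSum f f₁ f₂ a) (ha1 : a < 1) :
    ∀ x ∈ Icc 0 a, ∀ y ∈ Icc 0 a, f x y = ordinalSummand f₁ 0 a x y := by
  intro x hx y hy
  rw [hf x ⟨hx.1, hx.2.trans ha1.le⟩ y ⟨hy.1, hy.2.trans ha1.le⟩, if_pos ⟨hx, hy⟩]
  simp only [ordinalSummand, sub_zero, zero_add]

/-- At the common point `(a, a)` of the two blocks both formulas give `a`. -/
theorem eq_ordinalSummand_high (hf : IsOrdinalSum f f₁ f₂ a) (ha0 : 0 < a)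
    (h₁ : f₁ 1 1 = 1) (h₂ : f₂ 0 0 = 0) :
    ∀ x ∈ Icc a 1, ∀ y ∈ Icc a 1, f x y = ordinalSummand f₂ a 1 x y := by
  intro x hx y hy
  rw [hf x ⟨ha0.le.trans hx.1, hx.2⟩ y ⟨ha0.le.trans hy.1, hy.2⟩]
  split_ifs with hlow hhigh
  · obtain rfl : x = a := le_antisymm hlow.1.2 hx.1
    obtain rfl : y = x := le_antisymm hlow.2.2 hy.1
    simp only [ordinalSummand, div_self ha0.ne', sub_self, zero_div, h₁, h₂]
    ring
  · rfl
  · exact absurd ⟨hx, hy⟩ hhigh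

theorem eq_left {x y : ℝ} (hf : IsOrdinalSum f f₁ f₂ a) (hx : 0 ≤ x) (hxa : x < a)
    (hay : a < y) (hy : y ≤ 1) : f x y = x := by
  rw [hf x ⟨hx, by linarith⟩ y ⟨by linarith, hy⟩, if_neg fun h => by linarith [h.2.2],
    if_neg fun h => by linarith [h.1.1], min_eq_left (by linarith)]

end IsOrdinalSum

theorem ordinal_sum_propA (f f₁ f₂ : ℝ → ℝ → ℝ) (a : ℝ)
    (ha0 : 0 < a) (ha1 : a < 1)
    (hf₁ : IsTnorm f₁) (hf₂ : IsTnorm f₂)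
    (hA₁ : PropA f₁) (hA₂ : PropA f₂)
    (hf : ∀ x ∈ Icc (0:ℝ) 1, ∀ y ∈ Icc (0:ℝ) 1,
      f x y = if x ∈ Icc (0:ℝ) a ∧ y ∈ Icc (0:ℝ) a then a * f₁ (x / a) (y / a)
        else if x ∈ Icc a 1 ∧ y ∈ Icc a 1 then
          a + (1 - a) * f₂ ((x - a) / (1 - a)) ((y - a) / (1 - a))
        else min x y) :
    PropA f := by
  have hf : IsOrdinalSum f f₁ f₂ a := hf
  have h0 : (0 : ℝ) ∈ Icc (0 : ℝ) 1 := ⟨le_rfl, zero_le_one⟩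
  have h1 : (1 : ℝ) ∈ Icc (0 : ℝ) 1 := ⟨zero_le_one, le_rfl⟩
  have hlow := hf.eq_ordinalSummand_low ha1
  have hhigh := hf.eq_ordinalSummand_high ha0 (hf₁.map_one_right h1) (hf₂.map_zero_left h0)
  have hlowA := hA₁.propAOn_ordinalSummand ha0
  intro x y z w hx hxy hyz hzw hw hsum
  rcases le_or_gt w a with hwa | haw
  · exact hlowA.congr hlow x y z w hx hxy hyz hzw hwa hsum
  rcases le_or_gt a x with hax | hxa
  · exact (hA₂.propAOn_ordinalSummand ha1).congr hhigh x y z w hax hxy hyz hzw hw hsum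
  rw [hf.eq_left hx hxa haw hw]
  rcases le_or_gt z a with hza | haz
  · have hid : ∀ u ∈ Icc 0 a, ordinalSummand f₁ 0 a u a = u := fun u hu =>
      ordinalSummand_right_end (fun v hv => hf₁.map_one_right hv) ha0 hu
    rw [hlow y ⟨by linarith, by linarith⟩ z ⟨by linarith, hza⟩]
    calc x ≤ y + z - a := by linarith
      _ ≤ _ := hlowA.add_sub_le hid (by linarith) hyz hza
  rcases le_or_gt a y with hay | hya
  · have hy : y ∈ Icc a 1 := ⟨hay, by linarith⟩
    have hz : z ∈ Icc a 1 := ⟨haz.le, by linarith⟩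
    rw [hhigh y hy z hz]
    linarith [le_ordinalSummand hf₂ ha1 hy hz]
  · rw [hf.eq_left (by linarith) hya haz (by linarith)]
    exact hxy
end
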